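/- arXiv:1412.8481 — 9 statements merged into one kernel-verified Lean document; each statement's English description precedes it below -/
import Mathlib

section
/- Let p ∈ (0, ∞) and let (Ω, μ) be a measure space. If D = [x_j(m_j); y_i(n_i)]_{s,t} is a signed simplex in L_p(Ω, μ) such that the essential range of each of the functions x_j, y_i is a subset of {0,1}, then γ_p(D) = ‖Σ_j m_j x_j − Σ_i n_i y_i‖_2², where ‖·‖_2 denotes the L_2(Ω, μ)-norm. In particular, γ_p(D) = 0 if and only if the simplex D is balanced. -/
open MeasureTheory ENNReal Filter
open scoped Classical

/-- A set `B` in `X`, equipped with the distance function `d`, has `p`-negative type: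
for all finite collections of distinct points of `B` and real weights summing to zero,
`∑_{j,i} d(z_j, z_i)^p ζ_j ζ_i ≤ 0`. -/
def HasNegativeType {X : Type*} (d : X → X → ℝ) (p : ℝ) (B : Set X) : Prop :=
  ∀ n : ℕ, 2 ≤ n → ∀ z : Fin n → X, Function.Injective z → (∀ k, z k ∈ B) →
    ∀ ζ : Fin n → ℝ, ∑ k, ζ k = 0 →
      ∑ j, ∑ i, d (z j) (z i) ^ p * (ζ j * ζ i) ≤ 0

/-- Strict `p`-negative type: `p`-negative type, with strict inequality whenever the
weight tuple `ζ` is nonzero. -/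
def HasStrictNegativeType {X : Type*} (d : X → X → ℝ) (p : ℝ) (B : Set X) : Prop :=
  HasNegativeType d p B ∧
    ∀ n : ℕ, 2 ≤ n → ∀ z : Fin n → X, Function.Injective z → (∀ k, z k ∈ B) →
      ∀ ζ : Fin n → ℝ, ∑ k, ζ k = 0 → ζ ≠ 0 →
        ∑ j, ∑ i, d (z j) (z i) ^ p * (ζ j * ζ i) < 0

/-- The `p`-simplex gap `γ_p(D)` of a signed `(s,t)`-simplex
`D = [x_j(m_j); y_i(n_i)]_{s,t}` with respect to the distance function `d`. -/
noncomputable def simplexGap {X : Type*} (d : X → X → ℝ) (p : ℝ) {s t : ℕ}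
    (x : Fin s → X) (y : Fin t → X) (m : Fin s → ℝ) (n : Fin t → ℝ) : ℝ :=
  (∑ j, ∑ i, m j * n i * d (x j) (y i) ^ p)
    - (∑ j₁, ∑ j₂, if j₁ < j₂ then m j₁ * m j₂ * d (x j₁) (x j₂) ^ p else 0)
    - (∑ i₁, ∑ i₂, if i₁ < i₂ then n i₁ * n i₂ * d (y i₁) (y i₂) ^ p else 0)

/-- A signed simplex is degenerate if for every point `z`, the repeating numbers
`m(z) = ∑_{j : x_j = z} m_j` and `n(z) = ∑_{i : y_i = z} n_i` coincide. -/
def SimplexDegenerate {X : Type*} {s t : ℕ}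
    (x : Fin s → X) (y : Fin t → X) (m : Fin s → ℝ) (n : Fin t → ℝ) : Prop :=
  ∀ z : X, (∑ j, if x j = z then m j else 0) = (∑ i, if y i = z then n i else 0)


/-- The distance on `L_p(Ω, μ)` induced by the `p`-(quasi-)norm:
`d(f, g) = ‖f − g‖_p = (∫ |f − g|^p dμ)^{1/p}`. -/
noncomputable def lpDist {Ω : Type*} [MeasurableSpace Ω] (p : ℝ) (μ : Measure Ω) (f g : Ω →ₘ[μ] ℝ) : ℝ :=
  (eLpNorm (⇑(f - g)) (ENNReal.ofReal p) μ).toReal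

/-- A set of (a.e.-classes of) measurable functions is two-valued if it has more than one
element and the essential range of each member is a subset of `{0, 1}`. -/
def TwoValued {Ω : Type*} [MeasurableSpace Ω] {μ : Measure Ω} (B : Set (Ω →ₘ[μ] ℝ)) : Prop :=
  B.Nontrivial ∧ ∀ f ∈ B, ∀ᵐ ω ∂μ, (f : Ω → ℝ) ω ∈ ({0, 1} : Set ℝ)

/-! For `{0,1}`-valued functions `|f - g| ^ p = |f - g| ^ 2` pointwise, so `d(f, g) ^ p = ‖f - g‖₂²`
for every `p > 0`: for the `p`-th power of the distance, the vertices of `D` sit inside the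
Hilbert space `L₂`. There, expanding `‖a - b‖² = ‖a‖² - 2⟪a, b⟫ + ‖b‖²`, the gap of a signed simplex
is `‖∑ m_j x_j - ∑ n_i y_i‖²`: the terms in `‖x_j‖²` and `‖y_i‖²` cancel because
`∑ m_j = ∑ n_i`. -/

theorem two_mul_sum_sum_ite_lt {ι : Type*} [Fintype ι] [LinearOrder ι] (A : ι → ι → ℝ)
    (hA : ∀ a b, A a b = A b a) (hA₀ : ∀ a, A a a = 0) :
    2 * ∑ a, ∑ b, (if a < b then A a b else 0) = ∑ a, ∑ b, A a b := by
  have hsplit : ∀ a b, A a b = (if a < b then A a b else 0) + (if b < a then A b a else 0) := by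
    intro a b
    rcases lt_trichotomy a b with h | rfl | h
    · simp [h, h.not_gt]
    · simp [hA₀]
    · simp [h, h.not_gt, hA a b]
  rw [Fintype.sum_congr _ _ fun a => Fintype.sum_congr _ _ fun b => hsplit a b]
  simp only [Finset.sum_add_distrib]
  rw [Finset.sum_comm (γ := ι) (f := fun a b => if b < a then A b a else 0)]
  ring

theorem sum_sum_mul_norm_sub_sq {E ι κ : Type*} [NormedAddCommGroup E] [InnerProductSpace ℝ E]
    [Fintype ι] [Fintype κ] (a : ι → ℝ) (b : κ → ℝ) (u : ι → E) (v : κ → E) :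
    ∑ j, ∑ i, a j * b i * ‖u j - v i‖ ^ 2 =
      (∑ j, a j * ‖u j‖ ^ 2) * ∑ i, b i + (∑ j, a j) * ∑ i, b i * ‖v i‖ ^ 2
        - 2 * inner ℝ (∑ j, a j • u j) (∑ i, b i • v i) := by
  simp only [sum_inner, inner_sum, real_inner_smul_left, real_inner_smul_right, Finset.mul_sum,
    Finset.sum_mul, ← Finset.sum_add_distrib, ← Finset.sum_sub_distrib, norm_sub_sq_real]
  rw [Finset.sum_comm (s := Finset.univ (α := κ))]
  refine Finset.sum_congr rfl fun j _ => Finset.sum_congr rfl fun i _ => ?_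
  ring

theorem simplexGap_norm_sub_eq {E : Type*} [NormedAddCommGroup E] [InnerProductSpace ℝ E]
    {s t : ℕ} (x : Fin s → E) (y : Fin t → E) (m : Fin s → ℝ) (n : Fin t → ℝ)
    (hbal : ∑ j, m j = ∑ i, n i) :
    simplexGap (fun a b : E => ‖a - b‖) 2 x y m n =
      ‖∑ j, m j • x j - ∑ i, n i • y i‖ ^ 2 := by
  have hx := two_mul_sum_sum_ite_lt (fun j₁ j₂ => m j₁ * m j₂ * ‖x j₁ - x j₂‖ ^ 2)
    (fun a b => by rw [norm_sub_rev]; ring) (fun a => by simp)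
  have hy := two_mul_sum_sum_ite_lt (fun i₁ i₂ => n i₁ * n i₂ * ‖y i₁ - y i₂‖ ^ 2)
    (fun a b => by rw [norm_sub_rev]; ring) (fun a => by simp)
  simp only [simplexGap, Real.rpow_two]
  rw [sum_sum_mul_norm_sub_sq] at hx hy ⊢
  rw [norm_sub_sq_real, ← real_inner_self_eq_norm_sq, ← real_inner_self_eq_norm_sq]
  linear_combination (-1 / 2 : ℝ) * hx - (1 / 2 : ℝ) * hy
    + ((∑ i, n i * ‖y i‖ ^ 2) - ∑ j, m j * ‖x j‖ ^ 2) * hbal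

theorem simplexGap_congr {X Y : Type*} {d : X → X → ℝ} {d' : Y → Y → ℝ} {p q : ℝ} {s t : ℕ}
    {x : Fin s → X} {y : Fin t → X} {x' : Fin s → Y} {y' : Fin t → Y}
    (m : Fin s → ℝ) (n : Fin t → ℝ)
    (hxy : ∀ j i, d (x j) (y i) ^ p = d' (x' j) (y' i) ^ q)
    (hxx : ∀ j j', d (x j) (x j') ^ p = d' (x' j) (x' j') ^ q)
    (hyy : ∀ i i', d (y i) (y i') ^ p = d' (y' i) (y' i') ^ q) :
    simplexGap d p x y m n = simplexGap d' q x' y' m n := by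
  simp only [simplexGap, hxy, hxx, hyy]

theorem norm_sub_mem_zero_one {a b : ℝ} (ha : a ∈ ({0, 1} : Set ℝ)) (hb : b ∈ ({0, 1} : Set ℝ)) :
    ‖a - b‖ ∈ ({0, 1} : Set ℝ) := by
  rcases ha with rfl | rfl <;> rcases hb with rfl | rfl <;> norm_num

section ZeroOneValued

variable {Ω E : Type*} [MeasurableSpace Ω] {μ : Measure Ω} [NormedAddCommGroup E]

theorem eLpNorm_ofReal_rpow_eq_eLpNorm_one {f : Ω → E}
    (hf : ∀ᵐ ω ∂μ, ‖f ω‖ ∈ ({0, 1} : Set ℝ)) {p : ℝ} (hp : 0 < p) :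
    eLpNorm f (ENNReal.ofReal p) μ ^ p = eLpNorm f 1 μ := by
  rw [eLpNorm_eq_lintegral_rpow_enorm_toReal (by simpa using hp) ofReal_ne_top,
    toReal_ofReal hp.le, ← ENNReal.rpow_mul, one_div_mul_cancel hp.ne', ENNReal.rpow_one,
    eLpNorm_one_eq_lintegral_enorm]
  refine lintegral_congr_ae (hf.mono fun ω hω => ?_)
  change ‖f ω‖ₑ ^ p = ‖f ω‖ₑ
  rw [← ofReal_norm]
  obtain h | h : ‖f ω‖ = 0 ∨ ‖f ω‖ = 1 := hω <;> simp [h, ENNReal.zero_rpow_of_pos hp]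

theorem MeasureTheory.MemLp.of_norm_mem_zero_one {f : Ω → E} {p q : ℝ}
    (hf : MemLp f (ENNReal.ofReal p) μ)
    (hf01 : ∀ᵐ ω ∂μ, ‖f ω‖ ∈ ({0, 1} : Set ℝ)) (hp : 0 < p) (hq : 0 < q) :
    MemLp f (ENNReal.ofReal q) μ := by
  refine ⟨hf.1, ?_⟩
  have h := ENNReal.rpow_lt_top_of_nonneg hp.le hf.eLpNorm_ne_top
  rw [eLpNorm_ofReal_rpow_eq_eLpNorm_one hf01 hp,
    ← eLpNorm_ofReal_rpow_eq_eLpNorm_one hf01 hq] at h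
  exact (ENNReal.rpow_lt_top_iff_of_pos hq).1 h

end ZeroOneValued

section Lp

variable {Ω : Type*} [MeasurableSpace Ω] {μ : Measure Ω}

theorem mem_Lp_two_of_ae_mem_zero_one {p : ℝ} (hp : 0 < p) {f : Ω →ₘ[μ] ℝ}
    (hf : MemLp f (ENNReal.ofReal p) μ) (hf01 : ∀ᵐ ω ∂μ, f ω ∈ ({0, 1} : Set ℝ)) :
    f ∈ Lp ℝ 2 μ := by
  have hnorm : ∀ᵐ ω ∂μ, ‖f ω‖ ∈ ({0, 1} : Set ℝ) :=
    hf01.mono fun ω hω => by simpa using norm_sub_mem_zero_one hω (Set.mem_insert 0 {1})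
  have h2 := hf.of_norm_mem_zero_one hnorm hp two_pos
  rw [ofReal_ofNat] at h2
  exact Lp.mem_Lp_iff_memLp.2 h2

theorem lpDist_rpow_eq_norm_sub_rpow_two {p : ℝ} (hp : 0 < p) {f g : Lp ℝ 2 μ}
    (hf : ∀ᵐ ω ∂μ, (f : Ω → ℝ) ω ∈ ({0, 1} : Set ℝ))
    (hg : ∀ᵐ ω ∂μ, (g : Ω → ℝ) ω ∈ ({0, 1} : Set ℝ)) :
    lpDist p μ f g ^ p = ‖f - g‖ ^ (2 : ℝ) := by
  have h01 : ∀ᵐ ω ∂μ, ‖(⇑((f : Ω →ₘ[μ] ℝ) - g) : Ω → ℝ) ω‖ ∈ ({0, 1} : Set ℝ) := by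
    filter_upwards [AEEqFun.coeFn_sub (f : Ω →ₘ[μ] ℝ) g, hf, hg] with ω hsub hfω hgω
    rw [hsub]
    exact norm_sub_mem_zero_one hfω hgω
  have h2 := eLpNorm_ofReal_rpow_eq_eLpNorm_one h01 two_pos
  rw [ofReal_ofNat] at h2
  rw [lpDist, Lp.norm_def, toReal_rpow, toReal_rpow, AddSubgroup.coe_sub, h2,
    eLpNorm_ofReal_rpow_eq_eLpNorm_one h01 hp]

end Lp

theorem twoValued_simplexGap_Lp_general {Ω : Type*} [MeasurableSpace Ω] (μ : Measure Ω)
    (p : ℝ) (hp : 0 < p) (s t : ℕ)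
    (x : Fin s → (Ω →ₘ[μ] ℝ)) (y : Fin t → (Ω →ₘ[μ] ℝ))
    (m : Fin s → ℝ) (n : Fin t → ℝ) (hbal : ∑ j, m j = ∑ i, n i)
    (hxLp : ∀ j, MemLp (⇑(x j)) (ENNReal.ofReal p) μ)
    (hyLp : ∀ i, MemLp (⇑(y i)) (ENNReal.ofReal p) μ)
    (hx : ∀ j, ∀ᵐ ω ∂μ, (x j : Ω → ℝ) ω ∈ ({0, 1} : Set ℝ))
    (hy : ∀ i, ∀ᵐ ω ∂μ, (y i : Ω → ℝ) ω ∈ ({0, 1} : Set ℝ)) :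
    simplexGap (lpDist p μ) p x y m n =
      (eLpNorm (⇑((∑ j, m j • x j) - ∑ i, n i • y i)) 2 μ).toReal ^ 2 ∧
    (simplexGap (lpDist p μ) p x y m n = 0 ↔ (∑ j, m j • x j) = ∑ i, n i • y i) := by
  let X : Fin s → Lp ℝ 2 μ := fun j => ⟨x j, mem_Lp_two_of_ae_mem_zero_one hp (hxLp j) (hx j)⟩
  let Y : Fin t → Lp ℝ 2 μ := fun i => ⟨y i, mem_Lp_two_of_ae_mem_zero_one hp (hyLp i) (hy i)⟩
  have hgap : simplexGap (lpDist p μ) p x y m n = ‖∑ j, m j • X j - ∑ i, n i • Y i‖ ^ 2 := by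
    rw [← simplexGap_norm_sub_eq X Y m n hbal]
    exact simplexGap_congr m n
      (fun j i => lpDist_rpow_eq_norm_sub_rpow_two hp (f := X j) (g := Y i) (hx j) (hy i))
      (fun j j' => lpDist_rpow_eq_norm_sub_rpow_two hp (f := X j) (g := X j') (hx j) (hx j'))
      (fun i i' => lpDist_rpow_eq_norm_sub_rpow_two hp (f := Y i) (g := Y i') (hy i) (hy i'))
  have hcoe : ((∑ j, m j • X j - ∑ i, n i • Y i : Lp ℝ 2 μ) : Ω →ₘ[μ] ℝ) =
      ∑ j, m j • x j - ∑ i, n i • y i := by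
    rw [AddSubgroup.coe_sub, AddSubgroup.val_finsetSum, AddSubgroup.val_finsetSum]
    rfl
  refine ⟨by rw [hgap, Lp.norm_def, hcoe], ?_⟩
  rw [hgap, sq_eq_zero_iff, norm_eq_zero, ← ZeroMemClass.coe_eq_zero, hcoe, sub_eq_zero]

/-- If `D = [x_j(m_j); y_i(n_i)]_{s,t}` is a signed simplex in
`L_p(Ω, μ)` whose vertices all have essential range contained in `{0,1}`, then
`γ_p(D) = ‖∑_j m_j x_j − ∑_i n_i y_i‖₂²`; in particular `γ_p(D) = 0` iff `D` is balanced. -/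
theorem twoValued_simplexGap_Lp {Ω : Type*} [MeasurableSpace Ω] (μ : Measure Ω)
    (p : ℝ) (hp : 0 < p) (s t : ℕ) (hs : 0 < s) (ht : 0 < t)
    (x : Fin s → (Ω →ₘ[μ] ℝ)) (y : Fin t → (Ω →ₘ[μ] ℝ))
    (m : Fin s → ℝ) (n : Fin t → ℝ) (hbal : ∑ j, m j = ∑ i, n i)
    (hxLp : ∀ j, MemLp (⇑(x j)) (ENNReal.ofReal p) μ)
    (hyLp : ∀ i, MemLp (⇑(y i)) (ENNReal.ofReal p) μ)
    (hx : ∀ j, ∀ᵐ ω ∂μ, (x j : Ω → ℝ) ω ∈ ({0, 1} : Set ℝ))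
    (hy : ∀ i, ∀ᵐ ω ∂μ, (y i : Ω → ℝ) ω ∈ ({0, 1} : Set ℝ)) :
    simplexGap (lpDist p μ) p x y m n =
      (eLpNorm (⇑((∑ j, m j • x j) - ∑ i, n i • y i)) 2 μ).toReal ^ 2 ∧
    (simplexGap (lpDist p μ) p x y m n = 0 ↔ (∑ j, m j • x j) = ∑ i, n i • y i) :=
  twoValued_simplexGap_Lp_general μ p hp s t x y m n hbal hxLp hyLp hx hy
end

section
/- Let p ∈ (0, ∞), let (Ω, μ) be a measure space, and let B ⊂ L_p(Ω, μ) be a two-valued set. Then B, with the metric inherited from L_p(Ω, μ), has p-negative type. -/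
open MeasureTheory ENNReal Filter
open scoped Classical

/-! For `{0, 1}`-valued functions `|f - g|^p = (f - g)^2` pointwise, so `d(f, g)^p` is the squared
`L_2` distance `∫ (f - g)^2`. Squared `L_2` distances have negative type because pointwise
`∑ j, ∑ i, (a_j - a_i)^2 ζ_j ζ_i = -2 (∑ k, ζ_k a_k)^2` whenever `∑ k, ζ_k = 0`. -/

theorem Finset.sum_sum_sq_sub_mul_mul_eq {ι R : Type*} [Fintype ι] [CommRing R]
    (ζ a : ι → R) (hζ : ∑ k, ζ k = 0) :
    ∑ j, ∑ i, (a j - a i) ^ 2 * (ζ j * ζ i) = -2 * (∑ k, ζ k * a k) ^ 2 := by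
  have expand : ∀ j i, (a j - a i) ^ 2 * (ζ j * ζ i)
      = (a j ^ 2 * ζ j) * ζ i + ζ j * (a i ^ 2 * ζ i) - 2 * ((ζ j * a j) * (ζ i * a i)) := by
    intros; ring
  simp only [expand, Finset.sum_sub_distrib, Finset.sum_add_distrib, ← Finset.sum_mul,
    ← Finset.mul_sum, hζ]
  ring

theorem Finset.sum_sum_sq_sub_mul_mul_nonpos {ι R : Type*} [Fintype ι] [CommRing R]
    [LinearOrder R] [IsStrictOrderedRing R] (ζ a : ι → R) (hζ : ∑ k, ζ k = 0) :
    ∑ j, ∑ i, (a j - a i) ^ 2 * (ζ j * ζ i) ≤ 0 := by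
  rw [Finset.sum_sum_sq_sub_mul_mul_eq ζ a hζ]
  exact mul_nonpos_of_nonpos_of_nonneg (by norm_num) (sq_nonneg _)

theorem hasNegativeType_of_rpow_eq_integral_sq {X Ω : Type*} [MeasurableSpace Ω] {μ : Measure Ω}
    {d : X → X → ℝ} {p : ℝ} {B : Set X} (F : X → Ω → ℝ)
    (hint : ∀ x ∈ B, ∀ y ∈ B, Integrable (fun ω => (F x ω - F y ω) ^ 2) μ)
    (hd : ∀ x ∈ B, ∀ y ∈ B, d x y ^ p = ∫ ω, (F x ω - F y ω) ^ 2 ∂μ) :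
    HasNegativeType d p B := by
  intro n _ z _ hzB ζ hζ
  have hint' : ∀ j i, Integrable (fun ω => (F (z j) ω - F (z i) ω) ^ 2 * (ζ j * ζ i)) μ :=
    fun j i => (hint _ (hzB j) _ (hzB i)).mul_const _
  calc ∑ j, ∑ i, d (z j) (z i) ^ p * (ζ j * ζ i)
      = ∑ j, ∑ i, ∫ ω, (F (z j) ω - F (z i) ω) ^ 2 * (ζ j * ζ i) ∂μ := by
        simp only [hd _ (hzB _) _ (hzB _), integral_mul_const]
    _ = ∫ ω, ∑ j, ∑ i, (F (z j) ω - F (z i) ω) ^ 2 * (ζ j * ζ i) ∂μ := by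
        rw [integral_finsetSum _ fun j _ => integrable_finsetSum _ fun i _ => hint' j i]
        exact Finset.sum_congr rfl fun j _ =>
          (integral_finsetSum _ fun i _ => hint' j i).symm
    _ ≤ 0 := integral_nonpos fun ω =>
        Finset.sum_sum_sq_sub_mul_mul_nonpos ζ (fun k => F (z k) ω) hζ

theorem norm_sub_rpow_eq_sq_sub {p : ℝ} (hp : 0 < p) {a b : ℝ} (ha : a ∈ ({0, 1} : Set ℝ))
    (hb : b ∈ ({0, 1} : Set ℝ)) : ‖a - b‖ ^ p = (a - b) ^ 2 := by
  rcases ha with rfl | rfl <;> rcases hb with rfl | rfl <;>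
    simp [Real.zero_rpow hp.ne']

section ZeroOneValued

variable {Ω : Type*} [MeasurableSpace Ω] {μ : Measure Ω} {p : ℝ} {f g : Ω →ₘ[μ] ℝ}

theorem memLp_coeFn_sub {q : ℝ≥0∞} (hfq : MemLp f q μ) (hgq : MemLp g q μ) :
    MemLp (f - g : Ω →ₘ[μ] ℝ) q μ :=
  (hfq.sub hgq).ae_eq (AEEqFun.coeFn_sub f g).symm

theorem norm_coeFn_sub_rpow_ae_eq_sq_sub (hp : 0 < p)
    (hf : ∀ᵐ ω ∂μ, f ω ∈ ({0, 1} : Set ℝ)) (hg : ∀ᵐ ω ∂μ, g ω ∈ ({0, 1} : Set ℝ)) :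
    (fun ω => ‖(f - g) ω‖ ^ p) =ᵐ[μ] fun ω => (f ω - g ω) ^ 2 := by
  filter_upwards [AEEqFun.coeFn_sub f g, hf, hg] with ω hsub hfω hgω
  rw [hsub, Pi.sub_apply, norm_sub_rpow_eq_sq_sub hp hfω hgω]

theorem integrable_sq_sub_of_memLp (hp : 0 < p)
    (hf : ∀ᵐ ω ∂μ, f ω ∈ ({0, 1} : Set ℝ)) (hg : ∀ᵐ ω ∂μ, g ω ∈ ({0, 1} : Set ℝ))
    (hfp : MemLp f (ENNReal.ofReal p) μ) (hgp : MemLp g (ENNReal.ofReal p) μ) :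
    Integrable (fun ω => (f ω - g ω) ^ 2) μ := by
  have hsub := memLp_coeFn_sub hfp hgp
  have h := hsub.integrable_norm_rpow (by simpa using hp) ENNReal.ofReal_ne_top
  rw [ENNReal.toReal_ofReal hp.le] at h
  exact h.congr (norm_coeFn_sub_rpow_ae_eq_sq_sub hp hf hg)

theorem lpDist_rpow_eq_integral_sq_sub (hp : 0 < p)
    (hf : ∀ᵐ ω ∂μ, f ω ∈ ({0, 1} : Set ℝ)) (hg : ∀ᵐ ω ∂μ, g ω ∈ ({0, 1} : Set ℝ))
    (hfp : MemLp f (ENNReal.ofReal p) μ) (hgp : MemLp g (ENNReal.ofReal p) μ) :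
    lpDist p μ f g ^ p = ∫ ω, (f ω - g ω) ^ 2 ∂μ := by
  have hsub := memLp_coeFn_sub hfp hgp
  have hI : 0 ≤ ∫ ω, (f ω - g ω) ^ 2 ∂μ := integral_nonneg fun ω => sq_nonneg _
  rw [lpDist, hsub.eLpNorm_eq_integral_rpow_norm (by simpa using hp) ENNReal.ofReal_ne_top,
    ENNReal.toReal_ofReal hp.le, ENNReal.toReal_ofReal (by positivity),
    integral_congr_ae (norm_coeFn_sub_rpow_ae_eq_sq_sub hp hf hg),
    ← Real.rpow_mul hI, inv_mul_cancel₀ hp.ne', Real.rpow_one]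

end ZeroOneValued

/-- A two-valued subset of `L_p(Ω, μ)` has `p`-negative type with respect
to the metric inherited from `L_p(Ω, μ)`. -/
theorem twoValued_hasNegativeType {Ω : Type*} [MeasurableSpace Ω] (μ : Measure Ω)
    (p : ℝ) (hp : 0 < p) (B : Set (Ω →ₘ[μ] ℝ)) (hB : TwoValued B)
    (hBLp : ∀ f ∈ B, MemLp (⇑f) (ENNReal.ofReal p) μ) :
    HasNegativeType (lpDist p μ) p B :=
  hasNegativeType_of_rpow_eq_integral_sq (μ := μ) (fun f : Ω →ₘ[μ] ℝ => ⇑f)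
    (fun f hf g hg =>
      integrable_sq_sub_of_memLp hp (hB.2 f hf) (hB.2 g hg) (hBLp f hf) (hBLp g hg))
    (fun f hf g hg =>
      lpDist_rpow_eq_integral_sq_sub hp (hB.2 f hf) (hB.2 g hg) (hBLp f hf) (hBLp g hg))
end

section
/- Let p ∈ (0, ∞), let (Ω, μ) be a measure space, and let B ⊂ L_p(Ω, μ) be a two-valued set. Then B, with the metric inherited from L_p(Ω, μ), has strict p-negative type if and only if B is an affinely independent subset of L_p(Ω, μ) when L_p(Ω, μ) is considered as a real vector space. -/
open MeasureTheory ENNReal Filter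
open scoped Classical

/-! On `{0, 1}`-valued functions `|f - g| ^ p = (f - g) ^ 2`, so `d(f, g) ^ p = ‖f - g‖₂ ^ 2`.
For weights `ζ` summing to zero, the quadratic form of negative type is therefore
`∑ d(z_j, z_i) ^ p ζ_j ζ_i = -2 ‖∑ ζ_k z_k‖₂ ^ 2`: it is never positive, and it vanishes exactly
when `∑ ζ_k z_k = 0`, i.e. when `ζ` witnesses an affine dependence among the `z_k`. -/

theorem Fin.eq_zero_of_sum_eq_zero_of_lt_two {k : Type*} [AddCommMonoid k] {n : ℕ} (hn : n < 2)
    {ζ : Fin n → k} (hζ : ∑ i, ζ i = 0) : ζ = 0 := by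
  interval_cases n
  · exact Subsingleton.elim _ _
  · ext i
    rwa [Fin.fin_one_eq_zero i, ← Fin.sum_univ_one ζ]

theorem affineIndependent_iff_forall_fin {k V : Type*} [Ring k] [AddCommGroup V] [Module k V]
    (B : Set V) :
    AffineIndependent k ((↑) : B → V) ↔
      ∀ n : ℕ, 2 ≤ n → ∀ z : Fin n → V, Function.Injective z → (∀ i, z i ∈ B) →
        ∀ ζ : Fin n → k, ∑ i, ζ i = 0 → ∑ i, ζ i • z i = 0 → ζ = 0 := by
  constructor
  · intro hB n _ z hz hzB ζ hζ hsum
    let z' : Fin n ↪ B := ⟨fun i => ⟨z i, hzB i⟩, fun i j h => hz congr($h.1)⟩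
    ext i
    exact (hB.comp_embedding z').eq_zero_of_sum_eq_zero hζ hsum i (Finset.mem_univ i)
  · intro h
    refine affineIndependent_iff.2 fun s w hw hsum b hb => ?_
    let E : Fin s.card ≃ s := s.equivFin.symm
    have hwE : (fun i => w (E i)) = 0 := by
      have hζ : ∑ i, w (E i) = 0 := by rwa [E.sum_comp (fun b => w b), Finset.sum_coe_sort]
      rcases lt_or_ge s.card 2 with hn | hn
      · exact Fin.eq_zero_of_sum_eq_zero_of_lt_two hn hζ
      refine h _ hn (fun i => E i) (fun i j hij => E.injective (Subtype.ext (Subtype.ext hij)))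
        (fun i => (E i : B).2) _ hζ ?_
      rwa [E.sum_comp (fun b => w b • (b : V)), Finset.sum_coe_sort s (fun b => w b • (b : V))]
    simpa [E] using congrFun hwE (E.symm ⟨b, hb⟩)

theorem hasStrictNegativeType_iff_affineIndependent_of_nonpos_of_eq_zero_iff {V : Type*}
    [AddCommGroup V] [Module ℝ V] (d : V → V → ℝ) (p : ℝ) (B : Set V)
    (hle : ∀ n : ℕ, ∀ z : Fin n → V, (∀ k, z k ∈ B) → ∀ ζ : Fin n → ℝ, ∑ k, ζ k = 0 →
      ∑ j, ∑ i, d (z j) (z i) ^ p * (ζ j * ζ i) ≤ 0)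
    (heq : ∀ n : ℕ, ∀ z : Fin n → V, (∀ k, z k ∈ B) → ∀ ζ : Fin n → ℝ, ∑ k, ζ k = 0 →
      (∑ j, ∑ i, d (z j) (z i) ^ p * (ζ j * ζ i) = 0 ↔ ∑ k, ζ k • z k = 0)) :
    HasStrictNegativeType d p B ↔ AffineIndependent ℝ ((↑) : B → V) := by
  rw [affineIndependent_iff_forall_fin]
  constructor
  · rintro ⟨-, hlt⟩ n hn z hz hzB ζ hζ hsum
    by_contra hne
    exact (hlt n hn z hz hzB ζ hζ hne).ne ((heq n z hzB ζ hζ).2 hsum)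
  · refine fun h => ⟨fun n _ z _ hzB ζ hζ => hle n z hzB ζ hζ,
      fun n hn z hz hzB ζ hζ hne => (hle n z hzB ζ hζ).lt_of_ne fun h0 => ?_⟩
    exact hne (h n hn z hz hzB ζ hζ ((heq n z hzB ζ hζ).1 h0))

theorem sum_sum_sub_sq_mul_mul_eq {ι R : Type*} [Fintype ι] [CommRing R] (a ζ : ι → R)
    (hζ : ∑ k, ζ k = 0) :
    ∑ j, ∑ i, (a j - a i) ^ 2 * (ζ j * ζ i) = -2 * (∑ k, ζ k * a k) ^ 2 := by
  have hexpand : ∀ j i, (a j - a i) ^ 2 * (ζ j * ζ i) =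
      ζ j * a j ^ 2 * ζ i + ζ j * (ζ i * a i ^ 2) - 2 * (ζ j * a j) * (ζ i * a i) := by
    intro j i; ring
  simp only [hexpand, Finset.sum_sub_distrib, Finset.sum_add_distrib, ← Finset.mul_sum,
    ← Finset.sum_mul, hζ, mul_zero, zero_mul, zero_add]
  ring

theorem Real.norm_sub_rpow_eq_sq_of_mem_zero_one {p x y : ℝ} (hp : 0 < p)
    (hx : x ∈ ({0, 1} : Set ℝ)) (hy : y ∈ ({0, 1} : Set ℝ)) : ‖x - y‖ ^ p = (x - y) ^ 2 := by
  rcases hx with rfl | rfl <;> rcases hy with rfl | rfl <;> simp [Real.zero_rpow hp.ne']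

namespace MeasureTheory

variable {Ω : Type*} [MeasurableSpace Ω] {μ : Measure Ω} {p : ℝ}

theorem AEEqFun.coeFn_sum {ι : Type*} (s : Finset ι) (F : ι → Ω →ₘ[μ] ℝ) :
    ⇑(∑ k ∈ s, F k) =ᵐ[μ] ∑ k ∈ s, ⇑(F k) := by
  induction s using Finset.induction_on with
  | empty => simpa using AEEqFun.coeFn_zero (β := ℝ) (μ := μ)
  | insert a s ha ih =>
    rw [Finset.sum_insert ha, Finset.sum_insert ha]
    exact (AEEqFun.coeFn_add _ _).trans (EventuallyEq.rfl.add ih)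

theorem AEEqFun.coeFn_sum_smul {ι : Type*} [Fintype ι] (ζ : ι → ℝ) (z : ι → Ω →ₘ[μ] ℝ) :
    ⇑(∑ k, ζ k • z k) =ᵐ[μ] fun ω => ∑ k, ζ k * z k ω := by
  filter_upwards [coeFn_sum Finset.univ (fun k => ζ k • z k),
    ae_all_iff.2 fun k => coeFn_smul (ζ k) (z k)] with ω hsum hsmul
  simp [hsum, hsmul]

theorem memLp_two_of_ae_mem_zero_one (hp : 0 < p) {f : Ω → ℝ}
    (h01 : ∀ᵐ ω ∂μ, f ω ∈ ({0, 1} : Set ℝ)) (hf : MemLp f (ENNReal.ofReal p) μ) :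
    MemLp f 2 μ := by
  refine (memLp_two_iff_integrable_sq hf.1).2 <|
    (hf.integrable_norm_rpow (by simpa using hp) ofReal_ne_top).congr ?_
  filter_upwards [h01] with ω hω
  simpa [ENNReal.toReal_ofReal hp.le] using
    Real.norm_sub_rpow_eq_sq_of_mem_zero_one hp hω (Set.mem_insert 0 {1})

theorem lpDist_rpow_eq_integral_sq (hp : 0 < p) {f g : Ω →ₘ[μ] ℝ}
    (hf01 : ∀ᵐ ω ∂μ, f ω ∈ ({0, 1} : Set ℝ)) (hg01 : ∀ᵐ ω ∂μ, g ω ∈ ({0, 1} : Set ℝ))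
    (hf : MemLp f (ENNReal.ofReal p) μ) (hg : MemLp g (ENNReal.ofReal p) μ) :
    lpDist p μ f g ^ p = ∫ ω, (f ω - g ω) ^ 2 ∂μ := by
  have hsub : MemLp (⇑(f - g)) (ENNReal.ofReal p) μ :=
    (hf.sub hg).ae_eq (AEEqFun.coeFn_sub f g).symm
  have hnorm : (fun ω => ‖(f - g) ω‖ ^ p) =ᵐ[μ] fun ω => (f ω - g ω) ^ 2 := by
    filter_upwards [hf01, hg01, AEEqFun.coeFn_sub f g] with ω hfω hgω hsubω
    rw [hsubω]
    exact Real.norm_sub_rpow_eq_sq_of_mem_zero_one hp hfω hgω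
  have hint_nonneg : 0 ≤ ∫ ω, ‖(f - g) ω‖ ^ p ∂μ :=
    integral_nonneg fun ω => Real.rpow_nonneg (norm_nonneg _) _
  rw [lpDist, hsub.eLpNorm_eq_integral_rpow_norm (by simpa using hp) ofReal_ne_top,
    ENNReal.toReal_ofReal hp.le, ENNReal.toReal_ofReal (Real.rpow_nonneg hint_nonneg _),
    ← Real.rpow_mul hint_nonneg, inv_mul_cancel₀ hp.ne', Real.rpow_one]
  exact integral_congr_ae hnorm

section ZeroOneValued

variable {ι : Type*} [Fintype ι] {z : ι → Ω →ₘ[μ] ℝ}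

theorem memLp_two_sum_smul_of_ae_mem_zero_one (hp : 0 < p)
    (hz01 : ∀ k, ∀ᵐ ω ∂μ, z k ω ∈ ({0, 1} : Set ℝ))
    (hzLp : ∀ k, MemLp (z k) (ENNReal.ofReal p) μ) (ζ : ι → ℝ) :
    MemLp (⇑(∑ k, ζ k • z k)) 2 μ := by
  rw [← Lp.mem_Lp_iff_memLp]
  exact (Lp.LpSubmodule ℝ ℝ 2 μ).sum_mem fun k _ => (Lp.LpSubmodule ℝ ℝ 2 μ).smul_mem (ζ k) <|
    Lp.mem_Lp_iff_memLp.2 (memLp_two_of_ae_mem_zero_one hp (hz01 k) (hzLp k))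

theorem sum_lpDist_rpow_mul_eq (hp : 0 < p) (hz01 : ∀ k, ∀ᵐ ω ∂μ, z k ω ∈ ({0, 1} : Set ℝ))
    (hzLp : ∀ k, MemLp (z k) (ENNReal.ofReal p) μ) {ζ : ι → ℝ} (hζ : ∑ k, ζ k = 0) :
    ∑ j, ∑ i, lpDist p μ (z j) (z i) ^ p * (ζ j * ζ i) =
      -2 * ∫ ω, (∑ k, ζ k • z k) ω ^ 2 ∂μ := by
  have hz2 k := memLp_two_of_ae_mem_zero_one hp (hz01 k) (hzLp k)
  have hint j i : Integrable (fun ω => (z j ω - z i ω) ^ 2 * (ζ j * ζ i)) μ :=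
    ((hz2 j).sub (hz2 i)).integrable_sq.mul_const _
  calc ∑ j, ∑ i, lpDist p μ (z j) (z i) ^ p * (ζ j * ζ i)
      = ∑ j, ∑ i, ∫ ω, (z j ω - z i ω) ^ 2 * (ζ j * ζ i) ∂μ := by
        simp only [lpDist_rpow_eq_integral_sq hp (hz01 _) (hz01 _) (hzLp _) (hzLp _),
          integral_mul_const]
    _ = ∫ ω, ∑ j, ∑ i, (z j ω - z i ω) ^ 2 * (ζ j * ζ i) ∂μ := by
        rw [integral_finsetSum _ fun j _ => integrable_finsetSum _ fun i _ => hint j i]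
        simp only [integral_finsetSum _ fun i _ => hint _ i]
    _ = ∫ ω, -2 * (∑ k, ζ k * z k ω) ^ 2 ∂μ := by
        simp only [sum_sum_sub_sq_mul_mul_eq _ ζ hζ]
    _ = -2 * ∫ ω, (∑ k, ζ k • z k) ω ^ 2 ∂μ := by
        rw [integral_const_mul]
        congr 1
        refine integral_congr_ae ?_
        filter_upwards [AEEqFun.coeFn_sum_smul ζ z] with ω hω
        rw [hω]

end ZeroOneValued

theorem AEEqFun.integral_sq_eq_zero_iff {F : Ω →ₘ[μ] ℝ} (hF : MemLp F 2 μ) :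
    ∫ ω, F ω ^ 2 ∂μ = 0 ↔ F = 0 := by
  rw [integral_eq_zero_iff_of_nonneg (fun ω => sq_nonneg _) hF.integrable_sq, AEEqFun.ext_iff]
  refine ⟨fun h => ?_, fun h => ?_⟩
  · filter_upwards [h, AEEqFun.coeFn_zero (β := ℝ) (μ := μ)] with ω hω h0
    simpa [h0] using hω
  · filter_upwards [h, AEEqFun.coeFn_zero (β := ℝ) (μ := μ)] with ω hω h0
    simp [hω, h0]

end MeasureTheory

/-- A two-valued subset of `L_p(Ω, μ)` has strict `p`-negative type
(with the metric inherited from `L_p(Ω, μ)`) if and only if it is affinely independent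
as a subset of the real vector space `L_p(Ω, μ)`. -/
theorem twoValued_strictNegativeType_iff_affineIndependent {Ω : Type*} [MeasurableSpace Ω]
    (μ : Measure Ω) (p : ℝ) (hp : 0 < p) (B : Set (Ω →ₘ[μ] ℝ)) (hB : TwoValued B)
    (hBLp : ∀ f ∈ B, MemLp (⇑f) (ENNReal.ofReal p) μ) :
    HasStrictNegativeType (lpDist p μ) p B ↔
      AffineIndependent ℝ ((↑) : B → (Ω →ₘ[μ] ℝ)) := by
  refine hasStrictNegativeType_iff_affineIndependent_of_nonpos_of_eq_zero_iff _ p B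
    (fun n z hzB ζ hζ => ?_) (fun n z hzB ζ hζ => ?_)
  all_goals
    have hz01 k := hB.2 _ (hzB k)
    have hzLp k := hBLp _ (hzB k)
    rw [sum_lpDist_rpow_mul_eq hp hz01 hzLp hζ]
  · have : 0 ≤ ∫ ω, (∑ k, ζ k • z k) ω ^ 2 ∂μ := integral_nonneg fun ω => sq_nonneg _
    linarith
  · rw [mul_eq_zero, or_iff_right (by norm_num)]
    exact AEEqFun.integral_sq_eq_zero_iff (memLp_two_sum_smul_of_ae_mem_zero_one hp hz01 hzLp ζ)
end

section
/- Let p ∈ (0, ∞), let (Ω, μ) be a measure space, and let B ⊂ L_p(Ω, μ) be a two-valued set. If B is affinely dependent when L_p(Ω, μ) is considered as a real vector space, then the generalized roundness of B (with the metric inherited from L_p(Ω, μ)) equals p; that is, B has p-negative type but does not have q-negative type for any q > p. -/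
open MeasureTheory ENNReal Filter
open scoped Classical

/-!
For two-valued functions `|f - g| ^ p = (f - g) ^ 2` pointwise, so `‖f - g‖_p ^ p = ‖f - g‖_2 ^ 2`
and the `p`-negative type form of points `z_k ∈ B` with weights `ζ_k` summing to zero equals
`-2 ‖∑ ζ_k z_k‖_2 ^ 2 ≤ 0`. An affine dependence gives `ζ ≠ 0` with `∑ ζ_k z_k = 0`, for which the
form vanishes. If `B` had `q`-negative type for some `q > p`, the kernel `T = d ^ q` would be
conditionally negative semidefinite; by Schoenberg, `exp (-l T)` is then positive semidefinite for
`l ≥ 0`, and the representation `t ^ a = C_a⁻¹ ∫₀^∞ (1 - e^{-t l}) l^{-1-a} dl` with `a = p / q < 1`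
makes the form of `T ^ a = d ^ p` strictly negative at every `ζ ≠ 0` with zero sum.
-/

section IntegralRepresentation

open Set

theorem setIntegral_Ioi_pos_of_eventually_pos {f : ℝ → ℝ} (hf : IntegrableOn f (Ioi 0))
    (hnn : ∀ x, 0 < x → 0 ≤ f x) (hev : ∀ᶠ x in atTop, 0 < f x) :
    0 < ∫ x in Ioi 0, f x := by
  rw [setIntegral_pos_iff_support_of_nonneg_ae
    ((ae_restrict_iff' measurableSet_Ioi).2 (ae_of_all _ hnn)) hf]
  obtain ⟨A, hA⟩ := eventually_atTop.1 hev
  have hsub : Ioi (max A 0) ⊆ Function.support f ∩ Ioi 0 := fun x hx =>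
    ⟨(hA x (le_of_max_le_left hx.le)).ne', (le_max_right A 0).trans_lt hx⟩
  exact lt_of_lt_of_le (by simp) (measure_mono hsub)

variable {a : ℝ}

theorem integrableOn_one_sub_exp_neg_mul_rpow (ha0 : 0 < a) (ha1 : a < 1) {t : ℝ} (ht : 0 ≤ t) :
    IntegrableOn (fun l : ℝ => (1 - Real.exp (-(t * l))) * l ^ (-1 - a)) (Ioi 0) := by
  have hmeas : AEStronglyMeasurable (fun l : ℝ => (1 - Real.exp (-(t * l))) * l ^ (-1 - a)) :=
    (by fun_prop : Measurable _).aestronglyMeasurable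
  have hbound : ∀ l : ℝ, 0 < l → ‖(1 - Real.exp (-(t * l))) * l ^ (-1 - a)‖
      ≤ min (t * l) 1 * l ^ (-1 - a) := by
    intro l hl
    have hexp_le : Real.exp (-(t * l)) ≤ 1 := Real.exp_le_one_iff.2 (by nlinarith)
    rw [Real.norm_eq_abs, abs_of_nonneg (mul_nonneg (by linarith) (by positivity))]
    refine mul_le_mul_of_nonneg_right (le_min ?_ ?_) (by positivity)
    · linarith [Real.add_one_le_exp (-(t * l))]
    · linarith [Real.exp_pos (-(t * l))]
  rw [← Ioc_union_Ioi_eq_Ioi (zero_le_one' ℝ)]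
  refine IntegrableOn.union ?_ ?_
  · have hint : IntegrableOn (fun l : ℝ => t * l ^ (-a)) (Ioc 0 1) :=
      ((intervalIntegrable_iff_integrableOn_Ioc_of_le zero_le_one).mp
        (intervalIntegral.intervalIntegrable_rpow' (r := -a) (by linarith))).const_mul t
    refine hint.mono' hmeas.restrict ((ae_restrict_iff' measurableSet_Ioc).2
      (ae_of_all _ fun l hl => (hbound l hl.1).trans ?_))
    calc min (t * l) 1 * l ^ (-1 - a) ≤ t * l * l ^ (-1 - a) :=
          mul_le_mul_of_nonneg_right (min_le_left _ _) (Real.rpow_nonneg hl.1.le _)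
      _ = t * l ^ (-a) := by
          rw [mul_assoc, ← Real.rpow_one_add' hl.1.le (by linarith)]; ring_nf
  · refine (integrableOn_Ioi_rpow_of_lt (a := -1 - a) (by linarith) zero_lt_one).mono'
      hmeas.restrict ((ae_restrict_iff' measurableSet_Ioi).2 (ae_of_all _ fun l hl => ?_))
    have hl0 : (0 : ℝ) < l := zero_lt_one.trans hl
    calc _ ≤ min (t * l) 1 * l ^ (-1 - a) := hbound l hl0
      _ ≤ 1 * l ^ (-1 - a) :=
          mul_le_mul_of_nonneg_right (min_le_right _ _) (Real.rpow_nonneg hl0.le _)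
      _ = l ^ (-1 - a) := one_mul _

theorem integral_one_sub_exp_neg_mul_rpow (ha : a ≠ 0) {t : ℝ} (ht : 0 ≤ t) :
    ∫ l in Ioi 0, (1 - Real.exp (-(t * l))) * l ^ (-1 - a)
      = (∫ u in Ioi 0, (1 - Real.exp (-u)) * u ^ (-1 - a)) * t ^ a := by
  rcases ht.eq_or_lt with rfl | ht
  · simp [Real.zero_rpow ha]
  have hscale : ∀ l ∈ Ioi (0 : ℝ), (1 - Real.exp (-(t * l))) * l ^ (-1 - a)
      = t ^ (1 + a) * ((1 - Real.exp (-(t * l))) * (t * l) ^ (-1 - a)) := by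
    intro l hl
    rw [Real.mul_rpow ht.le (le_of_lt hl)]
    have : t ^ (1 + a) * t ^ (-1 - a) = 1 := by rw [← Real.rpow_add ht]; norm_num
    linear_combination (-(1 - Real.exp (-(t * l))) * l ^ (-1 - a)) * this
  rw [setIntegral_congr_fun measurableSet_Ioi hscale, integral_const_mul,
    integral_comp_mul_left_Ioi (fun u => (1 - Real.exp (-u)) * u ^ (-1 - a)) 0 ht, mul_zero,
    smul_eq_mul, ← mul_assoc, ← Real.rpow_neg_one t, ← Real.rpow_add ht]
  ring_nf

theorem integral_one_sub_exp_neg_rpow_pos (ha0 : 0 < a) (ha1 : a < 1) :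
    0 < ∫ u in Ioi 0, (1 - Real.exp (-u)) * u ^ (-1 - a) := by
  have hpos : ∀ u : ℝ, 0 < u → 0 < (1 - Real.exp (-u)) * u ^ (-1 - a) := fun u hu =>
    mul_pos (by linarith [Real.exp_lt_one_iff.2 (neg_lt_zero.2 hu)]) (Real.rpow_pos_of_pos hu _)
  exact setIntegral_Ioi_pos_of_eventually_pos
    (by simpa using integrableOn_one_sub_exp_neg_mul_rpow ha0 ha1 zero_le_one)
    (fun u hu => (hpos u hu).le) ((eventually_gt_atTop 0).mono hpos)

end IntegralRepresentation

namespace Matrix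

open Set

variable {ι : Type*} [Fintype ι]

theorem dotProduct_mulVec_eq_sum_sum (A : Matrix ι ι ℝ) (x : ι → ℝ) :
    x ⬝ᵥ A *ᵥ x = ∑ j, ∑ i, A j i * (x j * x i) := by
  simp only [dotProduct, mulVec, Finset.mul_sum]
  exact Finset.sum_congr rfl fun j _ => Finset.sum_congr rfl fun i _ => by ring

theorem posSemidef_iff_sum_sum_nonneg {A : Matrix ι ι ℝ} :
    A.PosSemidef ↔ A.IsHermitian ∧ ∀ x : ι → ℝ, 0 ≤ ∑ j, ∑ i, A j i * (x j * x i) := by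
  simp only [posSemidef_iff_dotProduct_mulVec, star_trivial, dotProduct_mulVec_eq_sum_sum]

theorem PosSemidef.map_pow {A : Matrix ι ι ℝ} (hA : A.PosSemidef) (m : ℕ) :
    (A.map (· ^ m)).PosSemidef := by
  induction m with
  | zero =>
    have h := posSemidef_vecMulVec_self_star (fun _ : ι => (1 : ℝ))
    simp only [vecMulVec, star_trivial, mul_one] at h
    simp only [pow_zero]
    exact h
  | succ m ih =>
    have h : A.map (· ^ (m + 1)) = A.map (· ^ m) ⊙ A := by
      ext j i
      simp [pow_succ]
    exact h ▸ ih.hadamard hA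

theorem PosSemidef.map_exp {A : Matrix ι ι ℝ} (hA : A.PosSemidef) :
    (A.map Real.exp).PosSemidef := by
  refine posSemidef_iff_sum_sum_nonneg.2 ⟨hA.isHermitian.map _ fun _ => rfl, fun x => ?_⟩
  have hsum : HasSum (fun m : ℕ => (∑ j, ∑ i, A j i ^ m * (x j * x i)) / m.factorial)
      (∑ j, ∑ i, Real.exp (A j i) * (x j * x i)) := by
    simp only [Finset.sum_div]
    refine hasSum_sum fun j _ => hasSum_sum fun i _ => ?_
    simpa only [Real.exp_eq_exp_ℝ, div_mul_eq_mul_div] using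
      (NormedSpace.expSeries_div_hasSum_exp (A j i)).mul_right (x j * x i)
  exact hsum.nonneg fun m =>
    div_nonneg ((posSemidef_iff_sum_sum_nonneg.1 (hA.map_pow m)).2 x) (Nat.cast_nonneg _)

def IsCondNegSemidef (T : Matrix ι ι ℝ) : Prop :=
  ∀ ζ : ι → ℝ, ∑ k, ζ k = 0 → ∑ j, ∑ i, T j i * (ζ j * ζ i) ≤ 0

omit [Fintype ι] in
theorem IsHermitian.apply_comm {T : Matrix ι ι ℝ} (hT : T.IsHermitian) (j i : ι) :
    T j i = T i j := by
  simpa using hT.apply i j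

theorem IsCondNegSemidef.posSemidef_basepoint {T : Matrix ι ι ℝ} (hT : T.IsHermitian)
    (hneg : T.IsCondNegSemidef) {b : ι} (hb : T b b = 0) :
    (of fun j i => T j b + T b i - T j i).PosSemidef := by
  refine posSemidef_iff_sum_sum_nonneg.2 ⟨?_, fun ξ => ?_⟩
  · ext j i
    simp only [conjTranspose_apply, of_apply, star_trivial, hT.apply_comm b, hT.apply_comm j i]
    ring
  -- `ζ = ξ - (∑ ξ) e_b` has zero sum, and its `T`-form is minus the new form at `ξ`.
  set σ := ∑ k, ξ k
  set Q := ∑ j, ∑ i, T j i * (ξ j * ξ i)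
  set r := ∑ i, T b i * ξ i
  have hrow : ∑ j, ∑ i, T b i * (ξ j * ξ i) = σ * r := by
    rw [Finset.sum_mul_sum]
    exact Finset.sum_congr rfl fun j _ => Finset.sum_congr rfl fun i _ => by ring
  have hcol : ∑ j, ∑ i, T j b * (ξ j * ξ i) = σ * r := by
    rw [Finset.sum_comm, ← hrow]
    exact Finset.sum_congr rfl fun j _ => Finset.sum_congr rfl fun i _ => by
      rw [hT.apply_comm i b]; ring
  set ζ : ι → ℝ := fun k => ξ k - if k = b then σ else 0
  have hζ : ∑ k, ζ k = 0 := by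
    simp [ζ, Finset.sum_sub_distrib, σ]
  have hQζ : ∑ j, ∑ i, T j i * (ζ j * ζ i) = Q - 2 * σ * r := by
    have hterm : ∀ j i, T j i * (ζ j * ζ i) = T j i * (ξ j * ξ i)
        - (if i = b then σ * (T j b * ξ j) else 0) - (if j = b then σ * (T b i * ξ i) else 0) := by
      intro j i
      by_cases hj : j = b <;> by_cases hi : i = b <;> simp [ζ, hj, hi, hb] <;> ring
    have hr : ∑ i, T i b * ξ i = r := Finset.sum_congr rfl fun i _ => by rw [hT.apply_comm]
    simp only [hterm, Finset.sum_sub_distrib, Finset.sum_ite_irrel, Finset.sum_const_zero,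
      Finset.sum_ite_eq', Finset.mem_univ, if_true, ← Finset.mul_sum, hr]
    ring
  calc 0 ≤ -∑ j, ∑ i, T j i * (ζ j * ζ i) := neg_nonneg.2 (hneg ζ hζ)
    _ = ∑ j, ∑ i, (of fun j i => T j b + T b i - T j i) j i * (ξ j * ξ i) := by
        simp only [hQζ, of_apply, add_mul, sub_mul, Finset.sum_add_distrib, Finset.sum_sub_distrib,
          hrow, hcol]
        ring

theorem IsCondNegSemidef.posSemidef_map_exp_neg {T : Matrix ι ι ℝ} (hT : T.IsHermitian)
    (hneg : T.IsCondNegSemidef) (hdiag : ∀ j, T j j = 0) {l : ℝ} (hl : 0 ≤ l) :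
    (T.map fun t => Real.exp (-(t * l))).PosSemidef := by
  rcases isEmpty_or_nonempty ι with hι | ⟨⟨b⟩⟩
  · rw [Subsingleton.elim (T.map _) 0]
    exact PosSemidef.zero
  -- `exp (-l T j i) = e j * exp (l K j i) * e i` with `e j = exp (-l T j b)` and `K` the
  -- base-point kernel, so `exp (-l T)` is a diagonal congruence of `exp (l K)`.
  set D : Matrix ι ι ℝ := diagonal fun j => Real.exp (-(l * T j b))
  have hK := ((hneg.posSemidef_basepoint hT (hdiag b)).smul hl).map_exp
  convert hK.mul_mul_conjTranspose_same D using 1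
  ext j i
  simp only [map_apply, D, diagonal_conjTranspose, diagonal_mul, mul_diagonal, smul_apply,
    of_apply, smul_eq_mul, star_trivial, ← Real.exp_add, hT.apply_comm b i]
  ring_nf

theorem tendsto_sum_sum_exp_neg_mul {T : Matrix ι ι ℝ} (hdiag : ∀ j, T j j = 0)
    (hpos : ∀ j i, j ≠ i → 0 < T j i) (ζ : ι → ℝ) :
    Tendsto (fun l => ∑ j, ∑ i, Real.exp (-(T j i * l)) * (ζ j * ζ i)) atTop (nhds (ζ ⬝ᵥ ζ)) := by
  have hlim : ∀ j i, Tendsto (fun l => Real.exp (-(T j i * l))) atTop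
      (nhds (if j = i then 1 else 0)) := by
    intro j i
    split_ifs with h
    · simp [h, hdiag]
    · exact Real.tendsto_exp_atBot.comp
        (tendsto_neg_atTop_atBot.comp (tendsto_id.const_mul_atTop (hpos j i h)))
  simpa [dotProduct, ite_mul] using tendsto_finsetSum Finset.univ fun j _ =>
    tendsto_finsetSum Finset.univ fun i _ => (hlim j i).mul_const (ζ j * ζ i)

theorem IsCondNegSemidef.sum_sum_rpow_mul_neg {T : Matrix ι ι ℝ} (hT : T.IsHermitian)
    (hneg : T.IsCondNegSemidef) (hdiag : ∀ j, T j j = 0) (hpos : ∀ j i, j ≠ i → 0 < T j i)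
    {a : ℝ} (ha0 : 0 < a) (ha1 : a < 1) {ζ : ι → ℝ} (hζ : ∑ k, ζ k = 0) (hζ0 : ζ ≠ 0) :
    ∑ j, ∑ i, T j i ^ a * (ζ j * ζ i) < 0 := by
  have hTnn : ∀ j i, 0 ≤ T j i := fun j i => by
    rcases eq_or_ne j i with rfl | h
    exacts [(hdiag j).ge, (hpos j i h).le]
  set G : ℝ → ℝ := fun l => ∑ j, ∑ i, Real.exp (-(T j i * l)) * (ζ j * ζ i)
  set F : ι → ι → ℝ → ℝ := fun j i l => (1 - Real.exp (-(T j i * l))) * l ^ (-1 - a)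
  -- The all-ones kernel has zero form at `ζ`, which is what makes `G l * l ^ (-1 - a)`
  -- integrable at `0`.
  have hGF : ∀ l, G l * l ^ (-1 - a) = -∑ j, ∑ i, F j i l * (ζ j * ζ i) := by
    intro l
    have hones : ∑ j, ∑ i, l ^ (-1 - a) * (ζ j * ζ i) = 0 := by simp [← Finset.mul_sum, hζ]
    simp only [G, F, sub_mul, one_mul, mul_assoc, Finset.sum_sub_distrib, hones, zero_sub,
      neg_neg, Finset.sum_mul]
    exact Finset.sum_congr rfl fun j _ => Finset.sum_congr rfl fun i _ => by ring
  have hFint : ∀ j i, IntegrableOn (fun l => F j i l * (ζ j * ζ i)) (Ioi 0) := fun j i =>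
    (integrableOn_one_sub_exp_neg_mul_rpow ha0 ha1 (hTnn j i)).mul_const _
  have hGint : IntegrableOn (fun l => G l * l ^ (-1 - a)) (Ioi 0) := by
    simp only [hGF]
    exact (integrable_finsetSum _ fun j _ => integrable_finsetSum _ fun i _ => hFint j i).neg
  have hrep : (∫ u in Ioi 0, (1 - Real.exp (-u)) * u ^ (-1 - a)) * ∑ j, ∑ i, T j i ^ a * (ζ j * ζ i)
      = -∫ l in Ioi 0, G l * l ^ (-1 - a) := by
    simp only [hGF, integral_neg, neg_neg]
    rw [integral_finsetSum _ fun j _ => integrable_finsetSum _ fun i _ => hFint j i]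
    simp only [Finset.mul_sum]
    refine Finset.sum_congr rfl fun j _ => ?_
    rw [integral_finsetSum _ fun i _ => hFint j i]
    refine Finset.sum_congr rfl fun i _ => ?_
    rw [integral_mul_const, integral_one_sub_exp_neg_mul_rpow ha0.ne' (hTnn j i)]
    ring
  have hGpos : 0 < ∫ l in Ioi 0, G l * l ^ (-1 - a) := by
    refine setIntegral_Ioi_pos_of_eventually_pos hGint (fun l hl => mul_nonneg ?_ ?_) ?_
    · exact (posSemidef_iff_sum_sum_nonneg.1 (hneg.posSemidef_map_exp_neg hT hdiag hl.le)).2 ζ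
    · exact Real.rpow_nonneg hl.le _
    · have hζζ : 0 < ζ ⬝ᵥ ζ := by simpa using dotProduct_self_star_pos_iff.2 hζ0
      filter_upwards [(tendsto_sum_sum_exp_neg_mul hdiag hpos ζ).eventually_const_lt hζζ,
        eventually_gt_atTop 0] with l hGl hl
      exact mul_pos hGl (Real.rpow_pos_of_pos hl _)
  have hC := integral_one_sub_exp_neg_rpow_pos ha0 ha1
  exact neg_of_mul_neg_right (by rw [hrep]; linarith) hC.le

end Matrix

theorem HasNegativeType.hasStrictNegativeType_of_lt {X : Type*} {d : X → X → ℝ} {B : Set X}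
    {p q : ℝ} (hq : HasNegativeType d q B) (hp : 0 < p) (hpq : p < q)
    (hd_self : ∀ x, d x x = 0) (hd_comm : ∀ x y, d x y = d y x)
    (hd_pos : ∀ x ∈ B, ∀ y ∈ B, x ≠ y → 0 < d x y) :
    HasStrictNegativeType d p B := by
  have hq0 : 0 < q := hp.trans hpq
  have hstrict : ∀ n : ℕ, 2 ≤ n → ∀ z : Fin n → X, Function.Injective z → (∀ k, z k ∈ B) →
      ∀ ζ : Fin n → ℝ, ∑ k, ζ k = 0 → ζ ≠ 0 →
        ∑ j, ∑ i, d (z j) (z i) ^ p * (ζ j * ζ i) < 0 := by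
    intro n hn z hz hzB ζ hζ hζ0
    set T : Matrix (Fin n) (Fin n) ℝ := .of fun j i => d (z j) (z i) ^ q
    have hdz : ∀ j i, 0 ≤ d (z j) (z i) := fun j i => by
      rcases eq_or_ne j i with rfl | h
      exacts [(hd_self _).ge, (hd_pos _ (hzB j) _ (hzB i) (hz.ne h)).le]
    have hT : T.IsHermitian := by
      ext j i
      simp [T, hd_comm (z j)]
    have hdiag : ∀ j, T j j = 0 := fun j => by simp [T, hd_self, Real.zero_rpow hq0.ne']
    have hpos : ∀ j i, j ≠ i → 0 < T j i := fun j i h =>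
      Real.rpow_pos_of_pos (hd_pos _ (hzB j) _ (hzB i) (hz.ne h)) q
    have hpow : ∀ j i, T j i ^ (p / q) = d (z j) (z i) ^ p := fun j i => by
      show (d (z j) (z i) ^ q) ^ (p / q) = _
      rw [← Real.rpow_mul (hdz j i), mul_div_cancel₀ p hq0.ne']
    simpa only [hpow] using Matrix.IsCondNegSemidef.sum_sum_rpow_mul_neg hT
      (fun ζ hζ => hq n hn z hz hzB ζ hζ) hdiag hpos (div_pos hp hq0)
      ((div_lt_one hq0).2 hpq) hζ hζ0
  refine ⟨fun n hn z hz hzB ζ hζ => ?_, hstrict⟩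
  rcases eq_or_ne ζ 0 with rfl | hζ0
  · simp
  · exact (hstrict n hn z hz hzB ζ hζ hζ0).le

theorem sum_sum_sq_sub_mul_eq {ι : Type*} [Fintype ι] (x ζ : ι → ℝ) (hζ : ∑ k, ζ k = 0) :
    ∑ j, ∑ i, (x j - x i) ^ 2 * (ζ j * ζ i) = -2 * (∑ k, ζ k * x k) ^ 2 := by
  have hterm : ∀ j i, (x j - x i) ^ 2 * (ζ j * ζ i)
      = (x j ^ 2 * ζ j) * ζ i + ζ j * (x i ^ 2 * ζ i) - 2 * ((ζ j * x j) * (ζ i * x i)) :=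
    fun j i => by ring
  simp only [hterm, Finset.sum_add_distrib, Finset.sum_sub_distrib, ← Finset.sum_mul,
    ← Finset.mul_sum, hζ]
  ring

theorem abs_sub_rpow_eq_sq_of_mem_zero_one {x y p : ℝ} (hx : x ∈ ({0, 1} : Set ℝ))
    (hy : y ∈ ({0, 1} : Set ℝ)) (hp : 0 < p) : |x - y| ^ p = (x - y) ^ 2 := by
  rcases hx with rfl | rfl <;> rcases hy with rfl | rfl <;> norm_num [Real.zero_rpow hp.ne']

section LpDist

variable {Ω : Type*} [MeasurableSpace Ω] {μ : Measure Ω} {p : ℝ}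

theorem lpDist_eq_eLpNorm_sub (f g : Ω →ₘ[μ] ℝ) :
    lpDist p μ f g = (eLpNorm (⇑f - ⇑g) (ENNReal.ofReal p) μ).toReal := by
  rw [lpDist, eLpNorm_congr_ae (AEEqFun.coeFn_sub f g)]

theorem lpDist_comm (f g : Ω →ₘ[μ] ℝ) : lpDist p μ f g = lpDist p μ g f := by
  rw [lpDist_eq_eLpNorm_sub, lpDist_eq_eLpNorm_sub, eLpNorm_sub_comm]

theorem lpDist_self (f : Ω →ₘ[μ] ℝ) : lpDist p μ f f = 0 := by
  simp [lpDist_eq_eLpNorm_sub]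

theorem lpDist_pos (hp : 0 < p) {f g : Ω →ₘ[μ] ℝ} (hf : MemLp f (ENNReal.ofReal p) μ)
    (hg : MemLp g (ENNReal.ofReal p) μ) (hne : f ≠ g) : 0 < lpDist p μ f g := by
  rw [lpDist_eq_eLpNorm_sub]
  refine ENNReal.toReal_pos (fun h0 => hne (AEEqFun.ext ?_)) (hf.sub hg).eLpNorm_ne_top
  filter_upwards [(eLpNorm_eq_zero_iff (hf.sub hg).1 (by simpa using hp)).1 h0] with ω hω
  exact sub_eq_zero.1 hω

theorem lpDist_rpow_eq_integral (hp : 0 < p) {f g : Ω →ₘ[μ] ℝ}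
    (hf : MemLp f (ENNReal.ofReal p) μ) (hg : MemLp g (ENNReal.ofReal p) μ) :
    lpDist p μ f g ^ p = ∫ ω, |f ω - g ω| ^ p ∂μ := by
  have hI : 0 ≤ ∫ ω, |f ω - g ω| ^ p ∂μ := integral_nonneg fun _ => by positivity
  rw [lpDist_eq_eLpNorm_sub, (hf.sub hg).eLpNorm_eq_integral_rpow_norm (by simpa using hp)
    ofReal_ne_top]
  simp only [toReal_ofReal hp.le, Pi.sub_apply, Real.norm_eq_abs]
  rw [toReal_ofReal (by positivity), ← Real.rpow_mul hI, inv_mul_cancel₀ hp.ne', Real.rpow_one]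

theorem sum_sum_lpDist_rpow_mul_eq (hp : 0 < p) {ι : Type*} [Fintype ι]
    (z : ι → Ω →ₘ[μ] ℝ) (h01 : ∀ k, ∀ᵐ ω ∂μ, z k ω ∈ ({0, 1} : Set ℝ))
    (hz : ∀ k, MemLp (z k) (ENNReal.ofReal p) μ) (ζ : ι → ℝ) (hζ : ∑ k, ζ k = 0) :
    ∑ j, ∑ i, lpDist p μ (z j) (z i) ^ p * (ζ j * ζ i)
      = -2 * ∫ ω, (∑ k, ζ k • z k) ω ^ 2 ∂μ := by
  have hsq : ∀ j i, (fun ω => |z j ω - z i ω| ^ p) =ᵐ[μ] fun ω => (z j ω - z i ω) ^ 2 :=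
    fun j i => by
      filter_upwards [h01 j, h01 i] with ω hj hi
      exact abs_sub_rpow_eq_sq_of_mem_zero_one hj hi hp
  have hint : ∀ j i, Integrable (fun ω => (z j ω - z i ω) ^ 2 * (ζ j * ζ i)) μ := fun j i => by
    refine (((hz j).sub (hz i)).integrable_norm_rpow (by simpa using hp) ofReal_ne_top).congr ?_
      |>.mul_const _
    simpa [toReal_ofReal hp.le] using hsq j i
  have hcomb : (fun ω => (∑ k, ζ k • z k) ω) =ᵐ[μ] fun ω => ∑ k, ζ k * z k ω := by
    filter_upwards [AEEqFun.coeFn_finsetSum Finset.univ (fun k => ζ k • z k),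
      ae_all_iff.2 fun k => AEEqFun.coeFn_smul (ζ k) (z k)] with ω hsum hsmul
    simp [hsum, hsmul]
  calc ∑ j, ∑ i, lpDist p μ (z j) (z i) ^ p * (ζ j * ζ i)
      = ∑ j, ∑ i, ∫ ω, (z j ω - z i ω) ^ 2 * (ζ j * ζ i) ∂μ := by
        simp only [lpDist_rpow_eq_integral hp (hz _) (hz _), integral_congr_ae (hsq _ _),
          integral_mul_const]
    _ = ∫ ω, ∑ j, ∑ i, (z j ω - z i ω) ^ 2 * (ζ j * ζ i) ∂μ := by
        rw [integral_finsetSum _ fun j _ => integrable_finsetSum _ fun i _ => hint j i]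
        simp only [integral_finsetSum _ fun i _ => hint _ i]
    _ = -2 * ∫ ω, (∑ k, ζ k • z k) ω ^ 2 ∂μ := by
        simp only [sum_sum_sq_sub_mul_eq _ ζ hζ, integral_const_mul]
        congr 1
        exact integral_congr_ae (hcomb.mono fun ω h => by simp [h])

end LpDist

theorem exists_fin_sum_smul_eq_zero_of_not_affineIndependent {k V : Type*} [Ring k]
    [AddCommGroup V] [Module k V] {B : Set V} (h : ¬AffineIndependent k ((↑) : B → V)) :
    ∃ n, 2 ≤ n ∧ ∃ z : Fin n → V, Function.Injective z ∧ (∀ j, z j ∈ B) ∧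
      ∃ ζ : Fin n → k, ∑ j, ζ j = 0 ∧ ζ ≠ 0 ∧ ∑ j, ζ j • z j = 0 := by
  obtain ⟨s, w, hw, hwz, i, hi, hwi⟩ : ∃ (s : Finset B) (w : B → k), ∑ x ∈ s, w x = 0 ∧
      ∑ x ∈ s, w x • (x : V) = 0 ∧ ∃ i ∈ s, w i ≠ 0 := by
    simpa [affineIndependent_iff] using h
  set e := s.equivFin
  refine ⟨s.card, ?_, fun j => e.symm j, fun j₁ j₂ h => e.symm.injective (Subtype.val_injective
    (Subtype.val_injective h)), fun j => (e.symm j : B).2, fun j => w (e.symm j), ?_, ?_, ?_⟩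
  · by_contra! hlt
    have hs : s = {i} := Finset.eq_singleton_iff_unique_mem.2
      ⟨hi, fun x hx => Finset.card_le_one.1 (by omega) x hx i hi⟩
    exact hwi (by simpa [hs] using hw)
  · rw [e.symm.sum_comp (fun x => w x), Finset.sum_coe_sort s w, hw]
  · exact fun h0 => hwi (by simpa [e] using congrFun h0 (e ⟨i, hi⟩))
  · rw [e.symm.sum_comp (fun x => w x • (x : V)), Finset.sum_coe_sort s (fun x => w x • (x : V)),
      hwz]

/-- If a two-valued subset `B` of `L_p(Ω, μ)` is affinely dependent (as a
subset of the real vector space `L_p(Ω, μ)`), then the generalized roundness of `B` with the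
metric inherited from `L_p(Ω, μ)` equals `p`: `B` has `p`-negative type but does not have
`q`-negative type for any `q > p`. -/
theorem twoValued_affineDependent_generalizedRoundness {Ω : Type*} [MeasurableSpace Ω]
    (μ : Measure Ω) (p : ℝ) (hp : 0 < p) (B : Set (Ω →ₘ[μ] ℝ)) (hB : TwoValued B)
    (hBLp : ∀ f ∈ B, MemLp (⇑f) (ENNReal.ofReal p) μ)
    (hdep : ¬ AffineIndependent ℝ ((↑) : B → (Ω →ₘ[μ] ℝ))) :
    HasNegativeType (lpDist p μ) p B ∧ ∀ q : ℝ, p < q → ¬ HasNegativeType (lpDist p μ) q B := by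
  have hform : ∀ n (z : Fin n → Ω →ₘ[μ] ℝ), (∀ k, z k ∈ B) → ∀ ζ : Fin n → ℝ, ∑ k, ζ k = 0 →
      ∑ j, ∑ i, lpDist p μ (z j) (z i) ^ p * (ζ j * ζ i)
        = -2 * ∫ ω, (∑ k, ζ k • z k) ω ^ 2 ∂μ := fun n z hzB =>
    sum_sum_lpDist_rpow_mul_eq hp z (fun k => hB.2 _ (hzB k)) (fun k => hBLp _ (hzB k))
  refine ⟨fun n _ z _ hzB ζ hζ => ?_, fun q hpq hq => ?_⟩
  · rw [hform n z hzB ζ hζ]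
    have : 0 ≤ ∫ ω, (∑ k, ζ k • z k) ω ^ 2 ∂μ := integral_nonneg fun ω => sq_nonneg _
    linarith
  · obtain ⟨n, hn, z, hz, hzB, ζ, hζ, hζ0, hcomb⟩ :=
      exists_fin_sum_smul_eq_zero_of_not_affineIndependent hdep
    have hneg := (hq.hasStrictNegativeType_of_lt hp hpq lpDist_self lpDist_comm
      fun f hf g hg hfg => lpDist_pos hp (hBLp f hf) (hBLp g hg) hfg).2 n hn z hz hzB ζ hζ hζ0
    have hzero : ∫ ω, (∑ k, ζ k • z k) ω ^ 2 ∂μ = 0 := by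
      rw [hcomb]
      exact integral_eq_zero_of_ae (AEEqFun.coeFn_zero.mono fun ω h => by simpa using h)
    rw [hform n z hzB ζ hζ, hzero, mul_zero] at hneg
    exact hneg.false
end

section
/- Let (Ω, μ) be a measure space and let B be a two-valued subset of M(Ω, μ). Then B is a subset of L_∞(Ω, μ), and B, equipped with the metric induced by the essential-supremum norm of L_∞(Ω, μ), is an ultrametric space; consequently B has strict p-negative type for all p ∈ (0, ∞). -/
open MeasureTheory ENNReal Filter
open scoped Classical

/-!
On a two-valued set the `L_∞` distance is the discrete metric: `f - g` takes only the values
`-1, 0, 1` a.e., so its essential supremum is `0` or `1`. The discrete metric is an ultrametric,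
and for distinct points `z_k` and any `p > 0` the sum `∑ d(z_j, z_i)^p ζ_j ζ_i` equals
`(∑ ζ_k)^2 - ∑ ζ_k^2`, which is `-∑ ζ_k^2 < 0` when `∑ ζ_k = 0` and `ζ ≠ 0`.
-/

section DiscreteMetric

variable {X : Type*} {d : X → X → ℝ} {B : Set X}

lemma sum_sum_rpow_mul_of_eq_ite (hd : ∀ x ∈ B, ∀ y ∈ B, d x y = if x = y then 0 else 1)
    {p : ℝ} (hp : 0 < p) {n : ℕ} {z : Fin n → X} (hz : Function.Injective z)
    (hzB : ∀ k, z k ∈ B) (ζ : Fin n → ℝ) :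
    ∑ j, ∑ i, d (z j) (z i) ^ p * (ζ j * ζ i) = (∑ k, ζ k) ^ 2 - ∑ k, ζ k ^ 2 := by
  have hterm : ∀ j i, d (z j) (z i) ^ p * (ζ j * ζ i) =
      ζ j * ζ i - if j = i then ζ j * ζ i else 0 := by
    intro j i
    rw [hd _ (hzB j) _ (hzB i), hz.eq_iff]
    split_ifs <;> simp [Real.zero_rpow hp.ne']
  simp only [hterm, Finset.sum_sub_distrib, Finset.sum_ite_eq, Finset.mem_univ, if_true,
    sq, Finset.sum_mul_sum]

lemma hasStrictNegativeType_of_eq_ite (hd : ∀ x ∈ B, ∀ y ∈ B, d x y = if x = y then 0 else 1)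
    {p : ℝ} (hp : 0 < p) : HasStrictNegativeType d p B := by
  have hsum : ∀ n (z : Fin n → X), Function.Injective z → (∀ k, z k ∈ B) →
      ∀ ζ : Fin n → ℝ, ∑ k, ζ k = 0 →
        ∑ j, ∑ i, d (z j) (z i) ^ p * (ζ j * ζ i) = -∑ k, ζ k ^ 2 := by
    intro n z hz hzB ζ hζ
    rw [sum_sum_rpow_mul_of_eq_ite hd hp hz hzB, hζ]
    ring
  refine ⟨fun n _ z hz hzB ζ hζ => ?_, fun n _ z hz hzB ζ hζ hζ0 => ?_⟩
  · rw [hsum n z hz hzB ζ hζ, neg_nonpos]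
    positivity
  · rw [hsum n z hz hzB ζ hζ, neg_lt_zero]
    obtain ⟨k, hk⟩ := Function.ne_iff.mp hζ0
    exact Finset.sum_pos' (fun k _ => sq_nonneg _) ⟨k, Finset.mem_univ k, pow_two_pos_of_ne_zero hk⟩

lemma le_max_of_eq_ite (hd : ∀ x ∈ B, ∀ y ∈ B, d x y = if x = y then 0 else 1)
    {x y w : X} (hx : x ∈ B) (hy : y ∈ B) (hw : w ∈ B) : d x w ≤ max (d x y) (d y w) := by
  rw [hd x hx w hw, hd x hx y hy, hd y hy w hw]
  split_ifs <;> simp_all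

end DiscreteMetric

section EssSup

variable {Ω : Type*} [MeasurableSpace Ω] {μ : Measure Ω}

lemma eLpNorm_top_eq_one_of_ae_norm_mem {E : Type*} [NormedAddCommGroup E] {u : Ω → E}
    (hu : ∀ᵐ ω ∂μ, ‖u ω‖ ∈ ({0, 1} : Set ℝ)) (hu0 : ¬u =ᵐ[μ] 0) : eLpNorm u ∞ μ = 1 := by
  refine le_antisymm ?_ ?_
  · simpa using eLpNorm_le_of_ae_bound (p := ∞) (C := 1)
      (hu.mono fun ω h => by obtain h | h : ‖u ω‖ = 0 ∨ ‖u ω‖ = 1 := h <;> simp [h])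
  · by_contra! hlt
    rw [eLpNorm_exponent_top] at hlt
    refine hu0 ?_
    filter_upwards [hu, ae_le_eLpNormEssSup (f := u) (μ := μ)] with ω hω hle
    obtain h | h : ‖u ω‖ = 0 ∨ ‖u ω‖ = 1 := hω
    · exact norm_eq_zero.mp h
    · rw [← ofReal_norm, h, ofReal_one] at hle
      exact absurd (hle.trans_lt hlt) (lt_irrefl 1)

lemma eLpNorm_top_sub_eq_ite {f g : Ω →ₘ[μ] ℝ}
    (hf : ∀ᵐ ω ∂μ, (f : Ω → ℝ) ω ∈ ({0, 1} : Set ℝ))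
    (hg : ∀ᵐ ω ∂μ, (g : Ω → ℝ) ω ∈ ({0, 1} : Set ℝ)) :
    eLpNorm (⇑(f - g)) ∞ μ = if f = g then 0 else 1 := by
  split_ifs with hfg
  · rw [hfg, sub_self, eLpNorm_congr_ae AEEqFun.coeFn_zero, eLpNorm_zero]
  · refine eLpNorm_top_eq_one_of_ae_norm_mem ?_ ?_
    · filter_upwards [hf, hg, AEEqFun.coeFn_sub f g] with ω hfω hgω hsub
      rw [hsub]
      obtain h₁ | h₁ : f ω = 0 ∨ f ω = 1 := hfω <;>
        obtain h₂ | h₂ : g ω = 0 ∨ g ω = 1 := hgω <;> simp [h₁, h₂]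
    · rwa [← AEEqFun.coeFn_zero.congr_right, ← AEEqFun.ext_iff, sub_eq_zero]

end EssSup

/-- A two-valued set `B` of (classes of) measurable functions on `(Ω, μ)`
lies in `L_∞(Ω, μ)`; with the metric induced by the essential-supremum norm it is an
ultrametric space, and consequently it has strict `p`-negative type for all `p ∈ (0, ∞)`. -/
theorem twoValued_Linfty_ultrametric {Ω : Type*} [MeasurableSpace Ω]
    (μ : Measure Ω) (B : Set (Ω →ₘ[μ] ℝ)) (hB : TwoValued B) :
    (∀ f ∈ B, MemLp (⇑f) ∞ μ) ∧
    (∀ f ∈ B, ∀ g ∈ B, ∀ h ∈ B,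
      (eLpNorm (⇑(f - h)) ∞ μ).toReal ≤
        max (eLpNorm (⇑(f - g)) ∞ μ).toReal (eLpNorm (⇑(g - h)) ∞ μ).toReal) ∧
    (∀ p : ℝ, 0 < p →
      HasStrictNegativeType (fun f g : Ω →ₘ[μ] ℝ => (eLpNorm (⇑(f - g)) ∞ μ).toReal) p B) := by
  have hd : ∀ f ∈ B, ∀ g ∈ B, (eLpNorm (⇑(f - g)) ∞ μ).toReal = if f = g then 0 else 1 := by
    intro f hf g hg
    rw [eLpNorm_top_sub_eq_ite (hB.2 f hf) (hB.2 g hg)]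
    split_ifs <;> simp
  refine ⟨fun f hf => ?_, fun f hf g hg h hh => le_max_of_eq_ite hd hf hg hh,
    fun p hp => hasStrictNegativeType_of_eq_ite hd hp⟩
  refine memLp_top_of_bound f.aestronglyMeasurable 1 ?_
  filter_upwards [hB.2 f hf] with ω h
  obtain h | h : f ω = 0 ∨ f ω = 1 := h <;> simp [h]
end

section
/- Suppose k, n ≥ 1. A subset B = {x_0, x_1, …, x_k} of the Hamming cube {0,1}^n ⊂ ℝ^n, equipped with the ℓ_1-metric d_1(x,y) = Σ_i |x_i − y_i|, is affinely independent (as a subset of the real vector space ℝ^n) if and only if (B, d_1) has strict 1-negative type. -/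
open MeasureTheory ENNReal Filter
open scoped Classical

/-! On `{0,1}` one has `|a - b| = (a - b)²`, so on the Hamming cube the `ℓ₁`-distance is the
squared Euclidean distance. For weights `ζ` summing to zero the negative-type form therefore
equals `-2 ‖∑ ζₖ zₖ‖²`: it is never positive, and it vanishes exactly when `∑ ζₖ zₖ = 0`,
that is, when `ζ` is an affine dependence among the points `zₖ`. -/

open Finset Function

def hammingCube (κ : Type*) : Set (κ → ℝ) := Set.univ.pi fun _ => {0, 1}

lemma abs_sub_eq_sq_of_mem_zero_one {a b : ℝ} (ha : a ∈ ({0, 1} : Set ℝ))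
    (hb : b ∈ ({0, 1} : Set ℝ)) : |a - b| = (a - b) ^ 2 := by
  rcases ha with rfl | rfl <;> rcases hb with rfl | rfl <;> norm_num

lemma Fintype.affineIndependent_iff {ι V : Type*} [Fintype ι] [AddCommGroup V] [Module ℝ V]
    {p : ι → V} :
    AffineIndependent ℝ p ↔ ∀ w : ι → ℝ, ∑ i, w i = 0 → ∑ i, w i • p i = 0 → w = 0 := by
  rw [affineIndependent_iff_of_fintype]
  refine forall_congr' fun w => forall_congr' fun hw => ?_
  rw [univ.weightedVSub_eq_linear_combination hw, funext_iff]
  rfl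

lemma sum_sum_sq_sub_mul_mul {ι : Type*} [Fintype ι] (a ζ : ι → ℝ) (hζ : ∑ k, ζ k = 0) :
    ∑ j, ∑ i, (a j - a i) ^ 2 * (ζ j * ζ i) = -2 * (∑ k, ζ k * a k) ^ 2 := by
  have hsq : ∀ j i, (a j - a i) ^ 2 * (ζ j * ζ i)
      = a j ^ 2 * ζ j * ζ i + ζ j * (a i ^ 2 * ζ i) - 2 * ((ζ j * a j) * (ζ i * a i)) :=
    fun j i => by ring
  simp only [hsq, sum_sub_distrib, sum_add_distrib, ← mul_sum, ← sum_mul, hζ]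
  ring

section HammingCube

variable {κ : Type*} [Fintype κ]

lemma sum_sum_l1Dist_mul_mul {m : ℕ} {z : Fin m → κ → ℝ} (hz : ∀ k, z k ∈ hammingCube κ)
    {ζ : Fin m → ℝ} (hζ : ∑ k, ζ k = 0) :
    ∑ j, ∑ i, (∑ t, |z j t - z i t|) ^ (1 : ℝ) * (ζ j * ζ i)
      = -2 * ((∑ k, ζ k • z k) ⬝ᵥ (∑ k, ζ k • z k)) := by
  have hsq : ∀ j i t, |z j t - z i t| = (z j t - z i t) ^ 2 := fun j i t =>
    abs_sub_eq_sq_of_mem_zero_one (hz j t trivial) (hz i t trivial)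
  calc ∑ j, ∑ i, (∑ t, |z j t - z i t|) ^ (1 : ℝ) * (ζ j * ζ i)
      = ∑ t, ∑ j, ∑ i, (z j t - z i t) ^ 2 * (ζ j * ζ i) := by
        simp only [Real.rpow_one, hsq, sum_mul]
        exact (sum_congr rfl fun j _ => sum_comm).trans sum_comm
    _ = ∑ t, -2 * (∑ k, ζ k * z k t) ^ 2 :=
        sum_congr rfl fun t _ => sum_sum_sq_sub_mul_mul (z · t) ζ hζ
    _ = -2 * ((∑ k, ζ k • z k) ⬝ᵥ (∑ k, ζ k • z k)) := by
        simp only [← mul_sum, dotProduct, Finset.sum_apply, Pi.smul_apply, smul_eq_mul, sq]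

lemma sum_sum_l1Dist_mul_mul_lt_zero_iff {m : ℕ} {z : Fin m → κ → ℝ}
    (hz : ∀ k, z k ∈ hammingCube κ) {ζ : Fin m → ℝ} (hζ : ∑ k, ζ k = 0) :
    ∑ j, ∑ i, (∑ t, |z j t - z i t|) ^ (1 : ℝ) * (ζ j * ζ i) < 0 ↔ ∑ k, ζ k • z k ≠ 0 := by
  rw [sum_sum_l1Dist_mul_mul hz hζ, ← Matrix.dotProduct_self_star_pos_iff, star_trivial]
  constructor <;> intro h <;> linarith

lemma hasNegativeType_l1Dist {B : Set (κ → ℝ)} (hB : B ⊆ hammingCube κ) :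
    HasNegativeType (fun a b : κ → ℝ => ∑ i, |a i - b i|) 1 B := by
  intro m _ z _ hzB ζ hζ
  rw [sum_sum_l1Dist_mul_mul (fun k => hB (hzB k)) hζ]
  have := dotProduct_self_star_nonneg (∑ k, ζ k • z k)
  rw [star_trivial] at this
  linarith

lemma hasStrictNegativeType_l1Dist_iff {B : Set (κ → ℝ)} (hB : B ⊆ hammingCube κ) :
    HasStrictNegativeType (fun a b : κ → ℝ => ∑ i, |a i - b i|) 1 B ↔
      ∀ m (z : Fin m → κ → ℝ), Injective z → (∀ k, z k ∈ B) → AffineIndependent ℝ z := by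
  rw [HasStrictNegativeType, and_iff_right (hasNegativeType_l1Dist hB)]
  constructor
  · intro h m z hinj hzB
    rcases lt_or_ge m 2 with hm | hm
    · have : Subsingleton (Fin m) := Fin.subsingleton_iff_le_one.2 (by omega)
      exact affineIndependent_of_subsingleton ℝ z
    refine Fintype.affineIndependent_iff.2 fun w hw hwz => ?_
    by_contra hne
    have hlt := h m hm z hinj hzB w hw hne
    exact (sum_sum_l1Dist_mul_mul_lt_zero_iff (fun k => hB (hzB k)) hw).1 hlt hwz
  · intro h m _ z hinj hzB ζ hζ hne
    refine (sum_sum_l1Dist_mul_mul_lt_zero_iff (fun k => hB (hzB k)) hζ).2 fun hv => hne ?_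
    exact Fintype.affineIndependent_iff.1 (h m z hinj hzB) ζ hζ hv

end HammingCube

theorem hammingCube_affineIndependent_iff_strictNegativeType_general (k n : ℕ)
    (x : Fin (k + 1) → (Fin n → ℝ)) (hinj : Function.Injective x)
    (hcube : ∀ j, ∀ i, x j i ∈ ({0, 1} : Set ℝ)) :
    AffineIndependent ℝ x ↔
      HasStrictNegativeType (fun a b : Fin n → ℝ => ∑ i, |a i - b i|) 1 (Set.range x) := by
  have hB : Set.range x ⊆ hammingCube (Fin n) := Set.range_subset_iff.2 fun j i _ => hcube j i
  rw [hasStrictNegativeType_l1Dist_iff hB]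
  refine ⟨fun hx m z hz hzB => ?_, fun h => h _ x hinj Set.mem_range_self⟩
  choose g hg using hzB
  obtain rfl : x ∘ g = z := funext hg
  exact hx.comp_embedding ⟨g, hz.of_comp⟩

/-- **Murugan's theorem.** For `k, n ≥ 1`, a subset
`B = {x_0, …, x_k}` of the Hamming cube `{0,1}ⁿ ⊂ ℝⁿ` (with the `ℓ₁`-metric
`d₁(a,b) = ∑ᵢ |aᵢ − bᵢ|`) is affinely independent if and only if it has strict
`1`-negative type. -/
theorem hammingCube_affineIndependent_iff_strictNegativeType (k n : ℕ) (hk : 1 ≤ k)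
    (hn : 1 ≤ n) (x : Fin (k + 1) → (Fin n → ℝ)) (hinj : Function.Injective x)
    (hcube : ∀ j, ∀ i, x j i ∈ ({0, 1} : Set ℝ)) :
    AffineIndependent ℝ x ↔
      HasStrictNegativeType (fun a b : Fin n → ℝ => ∑ i, |a i - b i|) 1 (Set.range x) :=
  hammingCube_affineIndependent_iff_strictNegativeType_general k n x hinj hcube
end

section
/- Let X be a real inner product space and let Z be a non-empty subset of X with |Z| > 1 (so that the inherited metric space is defined). Then Z, with the metric induced by the inner product norm, has strict 2-negative type if and only if Z is an affinely independent subset of X. -/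
open MeasureTheory ENNReal Filter
open scoped Classical

/-!
For weights `ζ` summing to zero, expanding `‖z_j - z_i‖² = ‖z_j‖² - 2⟪z_j, z_i⟫ + ‖z_i‖²`
kills the square-norm terms, so `∑ ‖z_j - z_i‖² ζ_j ζ_i = -2 ‖∑ ζ_k z_k‖²`. Hence every subset
of an inner product space has `2`-negative type, and the inequality fails to be strict exactly
when some nonzero zero-sum weight has `∑ ζ_k z_k = 0`, i.e. at an affine dependence.
-/

open Finset

section AffineIndependent

variable {k V : Type*} [Ring k] [AddCommGroup V] [Module k V]

theorem affineIndependent_iff_forall_sum_smul_eq_zero {ι : Type*} [Fintype ι] {p : ι → V} :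
    AffineIndependent k p ↔ ∀ w : ι → k, ∑ i, w i = 0 → ∑ i, w i • p i = 0 → w = 0 := by
  rw [affineIndependent_iff_of_fintype]
  refine forall₂_congr fun w hw => ?_
  rw [univ.weightedVSub_eq_linear_combination hw, funext_iff]
  rfl

theorem affineIndependent_subtype_iff_forall_fin {Z : Set V} :
    AffineIndependent k ((↑) : Z → V) ↔
      ∀ n (z : Fin n → V), Function.Injective z → (∀ i, z i ∈ Z) → AffineIndependent k z := by
  refine ⟨fun h n z hinj hz => ?_, fun h => affineIndependent_iff.2 fun s w hw hwp x hx => ?_⟩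
  · exact h.comp_embedding
      ⟨fun i => (⟨z i, hz i⟩ : Z), fun i j hij => hinj (congrArg Subtype.val hij)⟩
  set e : Fin #s ≃ s := s.equivFin.symm
  have hzero := affineIndependent_iff_forall_sum_smul_eq_zero.1
    (h #s (fun i => (e i : Z))
      (Subtype.val_injective.comp (Subtype.val_injective.comp e.injective)) fun i => (e i : Z).2)
    (fun i => w (e i))
    (by rw [e.sum_comp (fun y : s => w y), sum_coe_sort s w]; exact hw)
    (by rw [e.sum_comp (fun y : s => w y • (y : V)), sum_coe_sort s fun y => w y • (y : V)]
        exact hwp)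
  simpa using congrFun hzero (e.symm ⟨x, hx⟩)

end AffineIndependent

section InnerProductSpace

variable {X : Type*} [NormedAddCommGroup X] [InnerProductSpace ℝ X]

theorem sum_dist_sq_mul_eq_neg_two_mul_norm_sq {ι : Type*} [Fintype ι] (z : ι → X)
    {ζ : ι → ℝ} (hζ : ∑ i, ζ i = 0) :
    ∑ j, ∑ i, dist (z j) (z i) ^ 2 * (ζ j * ζ i) = -2 * ‖∑ i, ζ i • z i‖ ^ 2 := by
  have hnorm : ‖∑ i, ζ i • z i‖ ^ 2 = ∑ j, ∑ i, ζ j * ζ i * inner ℝ (z j) (z i) := by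
    rw [← real_inner_self_eq_norm_sq, sum_inner]
    refine sum_congr rfl fun j _ => ?_
    rw [inner_sum]
    refine sum_congr rfl fun i _ => ?_
    rw [real_inner_smul_left, real_inner_smul_right, mul_assoc]
  calc ∑ j, ∑ i, dist (z j) (z i) ^ 2 * (ζ j * ζ i)
      = ∑ j, ∑ i, (ζ i * (‖z j‖ ^ 2 * ζ j) + ζ j * (‖z i‖ ^ 2 * ζ i)
          - 2 * (ζ j * ζ i * inner ℝ (z j) (z i))) := by
        refine sum_congr rfl fun j _ => sum_congr rfl fun i _ => ?_
        rw [dist_eq_norm, norm_sub_sq_real]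
        ring
    _ = -2 * ‖∑ i, ζ i • z i‖ ^ 2 := by
        simp only [sum_sub_distrib, sum_add_distrib, ← sum_mul, ← mul_sum, hζ, hnorm]
        ring

theorem hasNegativeType_two (Z : Set X) : HasNegativeType (fun a b : X => dist a b) 2 Z := by
  intro n _ z _ _ ζ hζ
  simp only [Real.rpow_two, sum_dist_sq_mul_eq_neg_two_mul_norm_sq z hζ]
  exact mul_nonpos_of_nonpos_of_nonneg (by norm_num) (sq_nonneg _)

theorem hasStrictNegativeType_two_iff (Z : Set X) :
    HasStrictNegativeType (fun a b : X => dist a b) 2 Z ↔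
      ∀ n, 2 ≤ n → ∀ z : Fin n → X, Function.Injective z → (∀ i, z i ∈ Z) →
        AffineIndependent ℝ z := by
  refine (and_iff_right (hasNegativeType_two Z)).trans ?_
  refine forall₄_congr fun n _ z _ => forall_congr' fun _ => ?_
  rw [affineIndependent_iff_forall_sum_smul_eq_zero]
  refine forall₂_congr fun ζ hζ => ?_
  simp only [Real.rpow_two, sum_dist_sq_mul_eq_neg_two_mul_norm_sq z hζ]
  have hneg : -2 * ‖∑ i, ζ i • z i‖ ^ 2 < 0 ↔ ∑ i, ζ i • z i ≠ 0 := by simp [sq_pos_iff]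
  rw [hneg, not_imp_not]

end InnerProductSpace

theorem innerProductSpace_strictNegativeType_iff_affineIndependent_general
    {X : Type*} [NormedAddCommGroup X] [InnerProductSpace ℝ X]
    (Z : Set X) :
    HasStrictNegativeType (fun a b : X => dist a b) 2 Z ↔
      AffineIndependent ℝ ((↑) : Z → X) := by
  rw [hasStrictNegativeType_two_iff, affineIndependent_subtype_iff_forall_fin]
  refine ⟨fun h n z hinj hz => ?_, fun h n _ => h n⟩
  rcases lt_or_ge n 2 with hn | hn
  · have : Subsingleton (Fin n) := Fin.subsingleton_iff_le_one.2 (by omega)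
    exact affineIndependent_of_subsingleton ℝ z
  · exact h n hn z hinj hz

/-- A subset `Z` (with more than one point) of a real inner product
space has strict `2`-negative type, with the metric induced by the inner-product norm,
if and only if `Z` is affinely independent. -/
theorem innerProductSpace_strictNegativeType_iff_affineIndependent
    {X : Type*} [NormedAddCommGroup X] [InnerProductSpace ℝ X]
    (Z : Set X) (hZ : Z.Nontrivial) :
    HasStrictNegativeType (fun a b : X => dist a b) 2 Z ↔
      AffineIndependent ℝ ((↑) : Z → X) :=
  innerProductSpace_strictNegativeType_iff_affineIndependent_general Z
end

section
/- Let (X, d) be a metric space containing distinct points x, y, z such that d(x, z) = d(z, y) = d(x, y)/2 (i.e., z is a metric midpoint of x and y). Then (X, d) does not have q-negative type for any q > 2. -/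
/-!
Test the negative-type inequality on the three points `x, y, z` with weights `1, 1, -2`:
it gives `d(x,y)^q ≤ 2 (d(x,z)^q + d(z,y)^q)`. At a midpoint the right-hand side is
`4 (d(x,y)/2)^q = 2^(2-q) d(x,y)^q`, which is strictly smaller than `d(x,y)^q` once `q > 2`.
-/

open MeasureTheory ENNReal Filter
open scoped Classical

theorem injective_vecCons_three {X : Type*} {x y z : X} (hxy : x ≠ y) (hxz : x ≠ z)
    (hyz : y ≠ z) : Function.Injective ![x, y, z] :=
  Fin.cons_injective_iff.2
    ⟨by simp [Matrix.range_cons, hxy, hxz],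
      Fin.cons_injective_iff.2 ⟨by simp [hyz], Function.injective_of_subsingleton _⟩⟩

theorem HasNegativeType.dist_rpow_le_two_mul {X : Type*} [MetricSpace X] {q : ℝ} (hq : q ≠ 0)
    (h : HasNegativeType (fun a b : X => dist a b) q Set.univ) {x y z : X}
    (hxy : x ≠ y) (hxz : x ≠ z) (hyz : y ≠ z) :
    dist x y ^ q ≤ 2 * (dist x z ^ q + dist z y ^ q) := by
  have hform := h 3 (by norm_num) ![x, y, z] (injective_vecCons_three hxy hxz hyz)
    (fun _ => trivial) ![1, 1, -2] (by norm_num [Fin.sum_univ_three, Matrix.cons_val_two])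
  simp only [Fin.sum_univ_three, Matrix.cons_val_zero, Matrix.cons_val_one, Matrix.cons_val_two,
    Matrix.head_cons, Matrix.tail_cons, dist_self, Real.zero_rpow hq, dist_comm y x,
    dist_comm z x, dist_comm y z] at hform
  linarith

theorem four_mul_half_rpow_lt {D q : ℝ} (hD : 0 < D) (hq : 2 < q) : 4 * (D / 2) ^ q < D ^ q := by
  have hfour : (4 : ℝ) < 2 ^ q := by
    simpa [show (2 : ℝ) ^ (2 : ℝ) = 4 by norm_num] using
      Real.rpow_lt_rpow_of_exponent_lt one_lt_two hq
  rw [Real.div_rpow hD.le zero_le_two, mul_div_assoc', div_lt_iff₀ (by positivity)]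
  nlinarith [Real.rpow_pos_of_pos hD q]

/-- A metric space containing a metric midpoint configuration (distinct
points `x, y, z` with `d(x,z) = d(z,y) = d(x,y)/2`) does not have `q`-negative type for
any `q > 2`. -/
theorem midpoint_no_negativeType {X : Type*} [MetricSpace X] (x y z : X)
    (hxy : x ≠ y) (hxz : x ≠ z) (hyz : y ≠ z)
    (h1 : dist x z = dist x y / 2) (h2 : dist z y = dist x y / 2) :
    ∀ q : ℝ, 2 < q → ¬ HasNegativeType (fun a b : X => dist a b) q Set.univ := by
  intro q hq hneg
  have hle := hneg.dist_rpow_le_two_mul (by linarith) hxy hxz hyz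
  rw [h1, h2, ← two_mul, ← mul_assoc, show (2 : ℝ) * 2 = 4 by norm_num] at hle
  exact (four_mul_half_rpow_lt (dist_pos.2 hxy) hq).not_ge hle
end

section
/- Let 0 < p < 2 and consider the four points z_0 = (0,0), z_1 = (1,1), z_2 = (2,1), z_3 = (2,0) in ℝ² equipped with the metric d_p induced by the p-norm (the p-quasi-norm when 0 < p < 1). Then the set Z = {z_0, z_1, z_2, z_3} is affinely dependent in ℝ², yet (Z, d_p) has strict p-negative type. -/
open MeasureTheory ENNReal Filter
open scoped Classical

/-- The metric on `ℝⁿ` induced by the `p`-norm: `d_p(x,y) = (∑ |x_k − y_k|^p)^{1/p}` for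
`p ≥ 1`, and the `p`-quasi-norm metric `d_p(x,y) = ∑ |x_k − y_k|^p` for `0 < p < 1`. -/
noncomputable def dpDist (p : ℝ) {n : ℕ} (x y : Fin n → ℝ) : ℝ :=
  if 1 ≤ p then (∑ k, |x k - y k| ^ p) ^ (1 / p) else ∑ k, |x k - y k| ^ p

/-! Four points in the plane are always affinely dependent. For strict negative type, weights
on points of `Z` push forward to weights on the four points, so it suffices that the quadratic
form `∑ d_p(z_i, z_j)^p c_i c_j` is negative on nonzero `c` with `∑ c_i = 0`. Eliminating `c_3`
turns it into `-2` times a ternary quadratic form, which is positive definite by completing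
squares as soon as `2^p < 4` (for `p ≥ 1`) or, for `p < 1`, using `(2^p + 1)^p ≤ (2^p)^p + 1`. -/

open Function

theorem not_affineIndependent_range_of_finrank_add_one_lt {k V P ι : Type*} [DivisionRing k]
    [AddCommGroup V] [Module k V] [FiniteDimensional k V] [AddTorsor V P] [Fintype ι]
    {p : ι → P} (hp : Injective p) (hcard : Module.finrank k V + 1 < Fintype.card ι) :
    ¬ AffineIndependent k ((↑) : Set.range p → P) := fun h =>
  (h.of_set_of_injective hp).card_le_finrank_succ.not_gt <|
    hcard.trans_le' (Nat.add_le_add_right (Submodule.finrank_le _) 1)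

section Reindex

variable {ι κ : Type*} [Fintype ι] [Fintype κ] {σ : ι → κ}

theorem sum_mul_extend_zero (hσ : Injective σ) (g : κ → ℝ) (ζ : ι → ℝ) :
    ∑ a, g a * extend σ ζ 0 a = ∑ j, g (σ j) * ζ j := by
  rw [← Finset.sum_subset (Finset.subset_univ (Finset.univ.map ⟨σ, hσ⟩)), Finset.sum_map]
  · simp [hσ.extend_apply]
  · intro a _ ha
    rw [extend_apply' _ _ _ (by simpa using ha), Pi.zero_apply, mul_zero]

theorem sum_sum_mul_extend_zero (hσ : Injective σ) (D : κ → κ → ℝ) (ζ : ι → ℝ) :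
    ∑ a, ∑ b, D a b * (extend σ ζ 0 a * extend σ ζ 0 b)
      = ∑ j, ∑ i, D (σ j) (σ i) * (ζ j * ζ i) := by
  calc ∑ a, ∑ b, D a b * (extend σ ζ 0 a * extend σ ζ 0 b)
      = ∑ a, (∑ b, D a b * extend σ ζ 0 b) * extend σ ζ 0 a := by
        simp only [Finset.sum_mul]
        exact Finset.sum_congr rfl fun _ _ => Finset.sum_congr rfl fun _ _ => by ring
    _ = ∑ j, (∑ i, D (σ j) (σ i) * ζ i) * ζ j := by
        simp only [sum_mul_extend_zero hσ]
    _ = ∑ j, ∑ i, D (σ j) (σ i) * (ζ j * ζ i) := by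
        simp only [Finset.sum_mul]
        exact Finset.sum_congr rfl fun _ _ => Finset.sum_congr rfl fun _ _ => by ring

end Reindex

theorem hasStrictNegativeType_range {X κ : Type*} [Fintype κ] {d : X → X → ℝ} {p : ℝ}
    {z : κ → X}
    (h : ∀ c : κ → ℝ, ∑ a, c a = 0 → c ≠ 0 → ∑ a, ∑ b, d (z a) (z b) ^ p * (c a * c b) < 0) :
    HasStrictNegativeType d p (Set.range z) := by
  have strict : ∀ n, ∀ y : Fin n → X, Injective y → (∀ k, y k ∈ Set.range z) →
      ∀ ζ : Fin n → ℝ, ∑ k, ζ k = 0 → ζ ≠ 0 →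
        ∑ j, ∑ i, d (y j) (y i) ^ p * (ζ j * ζ i) < 0 := by
    intro n y hy hyz ζ hζ hζ0
    choose σ hσ using hyz
    have hσinj : Injective σ := fun i j hij => hy (by rw [← hσ i, ← hσ j, hij])
    have hsum : ∑ a, extend σ ζ 0 a = 0 := by
      simpa [hζ] using sum_mul_extend_zero hσinj 1 ζ
    have hne : extend σ ζ 0 ≠ 0 := fun h0 => hζ0 <| funext fun j => by
      rw [← hσinj.extend_apply ζ 0 j, h0, Pi.zero_apply, Pi.zero_apply]
    simpa only [sum_sum_mul_extend_zero hσinj, hσ] using h _ hsum hne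
  refine ⟨fun n _ y hy hyz ζ hζ => ?_, fun n _ => strict n⟩
  rcases eq_or_ne ζ 0 with rfl | hζ0
  · simp
  · exact (strict n y hy hyz ζ hζ hζ0).le

theorem dpDist_rpow {p : ℝ} (hp : 0 < p) {n : ℕ} (x y : Fin n → ℝ) :
    dpDist p x y ^ p =
      if 1 ≤ p then ∑ k, |x k - y k| ^ p else (∑ k, |x k - y k| ^ p) ^ p := by
  unfold dpDist
  split_ifs
  · rw [← Real.rpow_mul (by positivity), one_div_mul_cancel hp.ne', Real.rpow_one]
  · rfl

def fourPoints : Fin 4 → Fin 2 → ℝ := ![![0, 0], ![1, 1], ![2, 1], ![2, 0]]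

def fourPointMatrix (u v w : ℝ) : Matrix (Fin 4) (Fin 4) ℝ :=
  !![0, u, v, w; u, 0, 1, u; v, 1, 0, 1; w, u, 1, 0]

theorem dpDist_fourPoints_rpow_of_one_le {p : ℝ} (hp1 : 1 ≤ p) (a b : Fin 4) :
    dpDist p (fourPoints a) (fourPoints b) ^ p = fourPointMatrix 2 (2 ^ p + 1) (2 ^ p) a b := by
  have hp0 : 0 < p := by linarith
  fin_cases a <;> fin_cases b <;>
    norm_num [dpDist_rpow hp0, hp1, fourPoints, fourPointMatrix, Real.zero_rpow hp0.ne']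

theorem dpDist_fourPoints_rpow_of_lt_one {p : ℝ} (hp : 0 < p) (hp1 : p < 1) (a b : Fin 4) :
    dpDist p (fourPoints a) (fourPoints b) ^ p =
      fourPointMatrix (2 ^ p) ((2 ^ p + 1) ^ p) ((2 ^ p) ^ p) a b := by
  fin_cases a <;> fin_cases b <;>
    norm_num [dpDist_rpow hp, hp1.not_ge, fourPoints, fourPointMatrix, Real.zero_rpow hp.ne']

theorem fourPointForm_pos {u v w a b c : ℝ} (hw : 0 < w) (hv : 1 < v) (hvw : v ≤ w + 1)
    (hu : w < 4 * u - u ^ 2) (habc : ¬(a = 0 ∧ b = 0 ∧ c = 0)) :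
    0 < w * a ^ 2 + w * a * b + u * b ^ 2 + u * b * c + c ^ 2 - (v - w - 1) * a * c := by
  set t := v - w - 1
  set M := 4 * u * w - w ^ 2
  have hu0 : 0 < u := by nlinarith
  have hM : 0 < M := by nlinarith
  have hdet : 0 < 4 * u * w - u * t ^ 2 - w ^ 2 - u ^ 2 * w - u * w * t := by
    nlinarith [mul_pos hw (show 0 < 4 * u - u ^ 2 - w by linarith),
      mul_nonneg (mul_nonneg hu0.le (show 0 ≤ -t by linarith)) (show 0 ≤ w + t by linarith)]
  -- An LDLᵀ decomposition of the form, i.e. completing the square twice.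
  have ldl : 16 * w * M *
      (w * a ^ 2 + w * a * b + u * b ^ 2 + u * b * c + c ^ 2 - t * a * c)
      = 4 * M * (2 * w * a + w * b - t * c) ^ 2 + (2 * M * b + (4 * u * w + 2 * w * t) * c) ^ 2
        + 16 * w * (4 * u * w - u * t ^ 2 - w ^ 2 - u ^ 2 * w - u * w * t) * c ^ 2 := by
    ring
  have hrhs : 0 < 4 * M * (2 * w * a + w * b - t * c) ^ 2
      + (2 * M * b + (4 * u * w + 2 * w * t) * c) ^ 2
      + 16 * w * (4 * u * w - u * t ^ 2 - w ^ 2 - u ^ 2 * w - u * w * t) * c ^ 2 := by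
    rcases eq_or_ne c 0 with rfl | hc
    · rcases eq_or_ne b 0 with rfl | hb
      · have ha : a ≠ 0 := fun ha => habc ⟨ha, rfl, rfl⟩
        simp only [mul_zero, add_zero, sub_zero, zero_pow two_ne_zero]
        positivity
      · simp only [mul_zero, add_zero, sub_zero, zero_pow two_ne_zero]
        positivity
    · positivity
  exact pos_of_mul_pos_right (ldl ▸ hrhs) (by positivity)

theorem sum_sum_fourPointMatrix_mul_neg {u v w : ℝ} (hw : 0 < w) (hv : 1 < v) (hvw : v ≤ w + 1)
    (hu : w < 4 * u - u ^ 2) {c : Fin 4 → ℝ} (hc : ∑ a, c a = 0) (hc0 : c ≠ 0) :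
    ∑ a, ∑ b, fourPointMatrix u v w a b * (c a * c b) < 0 := by
  rw [Fin.sum_univ_four] at hc
  have h3 : c 3 = -(c 0 + c 1 + c 2) := by linarith
  have hne : ¬(c 0 = 0 ∧ c 1 = 0 ∧ c 2 = 0) := by
    rintro ⟨h0, h1, h2⟩
    exact hc0 (funext fun a => by fin_cases a <;> simp [h0, h1, h2, h3])
  have hpos := fourPointForm_pos hw hv hvw hu hne
  simp only [Fin.sum_univ_four, fourPointMatrix, h3, Matrix.of_apply, Matrix.cons_val',
    Matrix.cons_val_zero, Matrix.cons_val_one, Matrix.cons_val, Matrix.cons_val_fin_one]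
  linear_combination 2 * hpos

theorem sum_sum_dpDist_fourPoints_mul_neg {p : ℝ} (hp : 0 < p) (hp2 : p < 2) {c : Fin 4 → ℝ}
    (hc : ∑ a, c a = 0) (hc0 : c ≠ 0) :
    ∑ a, ∑ b, dpDist p (fourPoints a) (fourPoints b) ^ p * (c a * c b) < 0 := by
  have h2p : 1 < (2 : ℝ) ^ p := Real.one_lt_rpow one_lt_two hp
  rcases le_or_gt 1 p with hp1 | hp1
  · simp only [dpDist_fourPoints_rpow_of_one_le hp1]
    have h4 : (2 : ℝ) ^ p < 4 := by
      calc (2 : ℝ) ^ p < 2 ^ (2 : ℝ) := Real.rpow_lt_rpow_of_exponent_lt one_lt_two hp2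
        _ = 4 := by norm_num
    exact sum_sum_fourPointMatrix_mul_neg (by positivity) (by linarith) le_rfl (by linarith) hc hc0
  · simp only [dpDist_fourPoints_rpow_of_lt_one hp hp1]
    set u := (2 : ℝ) ^ p
    have hu2 : u < 2 := by simpa using Real.rpow_lt_rpow_of_exponent_lt one_lt_two hp1
    have hwu : u ^ p < u := by simpa using Real.rpow_lt_rpow_of_exponent_lt h2p hp1
    refine sum_sum_fourPointMatrix_mul_neg (by positivity) (Real.one_lt_rpow (by linarith) hp) ?_
      (by nlinarith) hc hc0
    simpa using Real.rpow_add_le_add_rpow (by positivity) zero_le_one hp.le hp1.le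

theorem range_fourPoints :
    Set.range fourPoints = {![0, 0], ![1, 1], ![2, 1], ![2, 0]} := by
  ext x
  simp only [fourPoints, Matrix.range_cons, Matrix.range_empty, Set.union_empty,
    Set.mem_union, Set.mem_insert_iff, Set.mem_singleton_iff]

theorem fourPoints_injective : Injective fourPoints := by
  intro a b h
  fin_cases a <;> fin_cases b <;>
    first | rfl | norm_num [fourPoints, funext_iff, Fin.forall_fin_two] at h

/-- For `0 < p < 2`, the set
`Z = {(0,0), (1,1), (2,1), (2,0)} ⊂ ℝ²` is affinely dependent, yet `(Z, d_p)` has strict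
`p`-negative type. -/
theorem fourPoint_example_strictNegativeType (p : ℝ) (hp : 0 < p) (hp2 : p < 2) :
    ¬ AffineIndependent ℝ
        ((↑) : ({![0, 0], ![1, 1], ![2, 1], ![2, 0]} : Set (Fin 2 → ℝ)) → (Fin 2 → ℝ)) ∧
    HasStrictNegativeType (dpDist p) p
      ({![0, 0], ![1, 1], ![2, 1], ![2, 0]} : Set (Fin 2 → ℝ)) := by
  rw [← range_fourPoints]
  exact ⟨not_affineIndependent_range_of_finrank_add_one_lt fourPoints_injective (by simp),
    hasStrictNegativeType_range fun _ => sum_sum_dpDist_fourPoints_mul_neg hp hp2⟩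
end
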